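/- arXiv:0805.1447 — 4 statements merged into one kernel-verified Lean document; each statement's English description precedes it below -/
import Mathlib

section
/- For every n ≥ 2, the product of two σ-positive braids in B_n is again σ-positive. (This gives transitivity of the Dehornoy ordering.) -/
/-- The braid relations among the generators `σ₁, …, σ_{n-1}` (generator `σᵢ` is
indexed by `i - 1 : Fin (n-1)`): `σᵢσⱼσᵢ = σⱼσᵢσⱼ` when `|i-j| = 1` and
`σᵢσⱼ = σⱼσᵢ` when `|i-j| ≥ 2`. -/
def braidRels (n : ℕ) : Set (FreeGroup (Fin (n - 1))) :=
  {r | ∃ i j : Fin (n - 1),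
      ((i : ℕ) + 1 = (j : ℕ) ∧
        r = FreeGroup.of i * FreeGroup.of j * FreeGroup.of i *
            (FreeGroup.of j * FreeGroup.of i * FreeGroup.of j)⁻¹) ∨
      ((i : ℕ) + 2 ≤ (j : ℕ) ∧
        r = FreeGroup.of i * FreeGroup.of j * (FreeGroup.of j * FreeGroup.of i)⁻¹)}

/-- The braid group `B_n` on `n` strands, presented by generators and braid relations. -/
abbrev BraidGroup (n : ℕ) : Type := PresentedGroup (braidRels n)

/-- The Artin generator `σᵢ` of `B_n` (`1 ≤ i ≤ n-1`), 1-indexed; junk value `1` otherwise. -/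
def sigma (n i : ℕ) : BraidGroup n :=
  if h : 1 ≤ i ∧ i ≤ n - 1 then PresentedGroup.of (⟨i - 1, by omega⟩ : Fin (n - 1)) else 1

/-- Evaluation of a word in the letters `σᵢ^{±1}` (a letter `(i, b)` means `σᵢ` if
`b = true` and `σᵢ⁻¹` if `b = false`) as an element of `B_n`. -/
def wordEval (n : ℕ) (w : List (ℕ × Bool)) : BraidGroup n :=
  (w.map (fun p => if p.2 then sigma n p.1 else (sigma n p.1)⁻¹)).prod

/-- A word in the letters `σ₁^{±1}, …, σ_{n-1}^{±1}`. -/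
def ValidWord (n : ℕ) (w : List (ℕ × Bool)) : Prop :=
  ∀ p ∈ w, 1 ≤ p.1 ∧ p.1 ≤ n - 1

/-- A braid `β ∈ B_n` is σ-positive if it is represented by a word in the letters
`σ₁^{±1}, …, σ_{n-1}^{±1}` which, for some `1 ≤ i ≤ n-1`, contains at least one
occurrence of `σᵢ` and no occurrence of `σ₁^{±1}, …, σ_{i-1}^{±1}` nor of `σᵢ⁻¹`. -/
def SigmaPositive (n : ℕ) (β : BraidGroup n) : Prop :=
  ∃ w : List (ℕ × Bool), ValidWord n w ∧ wordEval n w = β ∧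
    ∃ i : ℕ, 1 ≤ i ∧ i ≤ n - 1 ∧ (i, true) ∈ w ∧
      (∀ p ∈ w, i ≤ p.1) ∧ (i, false) ∉ w

/-- The Dehornoy ordering: `α < β` iff `α⁻¹β` is σ-positive. -/
def dlt (n : ℕ) (α β : BraidGroup n) : Prop := SigmaPositive n (α⁻¹ * β)

/-- The Garside fundamental braid `Δ = (σ₁⋯σ_{n-1})(σ₁⋯σ_{n-2})⋯(σ₁σ₂)(σ₁)`. -/
def delta (n : ℕ) : BraidGroup n :=
  ((List.range (n - 1)).reverse.map
    (fun L => ((List.range (L + 1)).map (fun i => sigma n (i + 1))).prod)).prod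

/-- The Dehornoy floor `[β]_D`: the minimal `m ≥ 0` with `Δ^{-2m-2} < β < Δ^{2m+2}`. -/
noncomputable def dFloor (n : ℕ) (β : BraidGroup n) : ℕ :=
  sInf {m : ℕ |
    dlt n (delta n ^ (-(2 * (m : ℤ)) - 2)) β ∧ dlt n β (delta n ^ (2 * (m : ℤ) + 2))}

/-- For every `n ≥ 2`, the product of two σ-positive braids in `B_n` is
again σ-positive. -/
theorem sigmaPositive_mul (n : ℕ) (hn : 2 ≤ n) (α β : BraidGroup n)
    (hα : SigmaPositive n α) (hβ : SigmaPositive n β) :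
    SigmaPositive n (α * β) := by
  obtain ⟨w1, hv1, he1, i, hi1, hi2, hmem1, hge1, hnf1⟩ := hα
  obtain ⟨w2, hv2, he2, j, hj1, hj2, hmem2, hge2, hnf2⟩ := hβ
  refine ⟨w1 ++ w2, ?_, ?_, min i j, le_min hi1 hj1, le_trans (min_le_left _ _) hi2, ?_, ?_, ?_⟩
  · intro p hp
    rcases List.mem_append.1 hp with h | h
    exacts [hv1 p h, hv2 p h]
  · rw [wordEval, List.map_append, List.prod_append, ← he1, ← he2]; rfl
  · rcases le_total i j with h | h
    · rw [min_eq_left h]; exact List.mem_append.2 (Or.inl hmem1)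
    · rw [min_eq_right h]; exact List.mem_append.2 (Or.inr hmem2)
  · intro p hp
    rcases List.mem_append.1 hp with h | h
    · exact le_trans (min_le_left _ _) (hge1 p h)
    · exact le_trans (min_le_right _ _) (hge2 p h)
  · intro hp
    rcases List.mem_append.1 hp with h | h
    · rcases le_total i j with hij | hij
      · rw [min_eq_left hij] at h; exact hnf1 h
      · rw [min_eq_right hij] at h
        have := hge1 _ h
        simp only at this
        have : i = j := le_antisymm this hij
        exact hnf1 (this ▸ h)
    · rcases le_total i j with hij | hij
      · rw [min_eq_left hij] at h
        have := hge2 _ h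
        simp only at this
        have : j = i := le_antisymm this hij
        exact hnf2 (this ▸ h)
      · rw [min_eq_right hij] at h; exact hnf2 h
end

section
/- For every n ≥ 2 and every braid β ∈ B_n there exists a non-negative integer m such that Δ^{−2m−2} < β < Δ^{2m+2} in the Dehornoy ordering; hence the Dehornoy floor [β]_D, defined as the minimal such m, exists for every braid. -/
namespace Dehornoy

lemma mk_rel_one {n : ℕ} {r : FreeGroup (Fin (n-1))} (hr : r ∈ braidRels n) :
    PresentedGroup.mk (braidRels n) r = 1 :=
  (QuotientGroup.eq_one_iff _).mpr (Subgroup.subset_normalClosure hr)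

lemma sigma_eq_of {n i : ℕ} (h1 : 1 ≤ i) (h2 : i ≤ n - 1) :
    sigma n i = PresentedGroup.of (⟨i - 1, by omega⟩ : Fin (n - 1)) := by
  simp [sigma, h1, h2]

set_option maxHeartbeats 1000000 in
lemma rel_braid {n i : ℕ} (h1 : 1 ≤ i) (h2 : i + 1 ≤ n - 1) :
    sigma n i * sigma n (i+1) * sigma n i = sigma n (i+1) * sigma n i * sigma n (i+1) := by
  set a : Fin (n-1) := ⟨i-1, by omega⟩ with ha
  set b : Fin (n-1) := ⟨i, by omega⟩ with hb
  have hr : (FreeGroup.of a * FreeGroup.of b * FreeGroup.of a *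
      (FreeGroup.of b * FreeGroup.of a * FreeGroup.of b)⁻¹) ∈ braidRels n := by
    exact ⟨a, b, Or.inl ⟨show i - 1 + 1 = i by omega, rfl⟩⟩
  have h : (PresentedGroup.of a : BraidGroup n) * PresentedGroup.of b * PresentedGroup.of a =
      PresentedGroup.of b * PresentedGroup.of a * PresentedGroup.of b := by
    have h0 := mk_rel_one hr
    simp only [map_mul, map_inv] at h0
    rw [mul_inv_eq_one] at h0
    exact h0
  have e1 : sigma n i = PresentedGroup.of a := sigma_eq_of h1 (by omega)
  have e2 : sigma n (i+1) = PresentedGroup.of b := sigma_eq_of (by omega) h2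
  rw [e1, e2]; exact h

set_option maxHeartbeats 1000000 in
lemma rel_comm {n i j : ℕ} (h1 : 1 ≤ i) (h2 : i + 2 ≤ j) (h3 : j ≤ n - 1) :
    sigma n i * sigma n j = sigma n j * sigma n i := by
  set a : Fin (n-1) := ⟨i-1, by omega⟩ with ha
  set b : Fin (n-1) := ⟨j-1, by omega⟩ with hb
  have hr : (FreeGroup.of a * FreeGroup.of b *
      (FreeGroup.of b * FreeGroup.of a)⁻¹) ∈ braidRels n := by
    exact ⟨a, b, Or.inr ⟨show i - 1 + 2 ≤ j - 1 by omega, rfl⟩⟩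
  have h : (PresentedGroup.of a : BraidGroup n) * PresentedGroup.of b =
      PresentedGroup.of b * PresentedGroup.of a := by
    have h0 := mk_rel_one hr
    simp only [map_mul, map_inv] at h0
    rw [mul_inv_eq_one] at h0
    exact h0
  have e1 : sigma n i = PresentedGroup.of a := sigma_eq_of h1 (by omega)
  have e2 : sigma n j = PresentedGroup.of b := sigma_eq_of (by omega) h3
  rw [e1, e2]; exact h

/-- `DD n k = σ₁σ₂⋯σ_k`. -/
def DD (n : ℕ) : ℕ → BraidGroup n
  | 0 => 1
  | (k+1) => DD n k * sigma n (k+1)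

/-- `Del n t = D_t D_{t-1} ⋯ D_1`, so `delta n = Del n (n-1)`. -/
def Del (n : ℕ) : ℕ → BraidGroup n
  | 0 => 1
  | (t+1) => DD n (t+1) * Del n t

lemma DD_eq_prod (n k : ℕ) :
    DD n k = ((List.range k).map (fun i => sigma n (i+1))).prod := by
  induction k with
  | zero => simp [DD]
  | succ k ih => rw [List.range_succ]; simp [DD, ih]

lemma delta_aux (n : ℕ) : ∀ t, ((List.range t).reverse.map
    (fun L => ((List.range (L + 1)).map (fun i => sigma n (i + 1))).prod)).prod = Del n t := by
  intro t
  induction t with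
  | zero => simp [Del]
  | succ t ih =>
      rw [List.range_succ]
      simp only [List.reverse_append, List.reverse_cons, List.reverse_nil, List.nil_append,
        List.map_cons, List.prod_cons, List.cons_append]
      rw [ih, ← DD_eq_prod]
      rfl

lemma delta_eq (n : ℕ) : delta n = Del n (n-1) := delta_aux n (n-1)

end Dehornoy

namespace Dehornoy

lemma DD_succ' {n k : ℕ} (h : 1 ≤ k) : DD n k = DD n (k-1) * sigma n k := by
  obtain ⟨k', rfl⟩ : ∃ k', k = k' + 1 := ⟨k - 1, by omega⟩
  rfl

/-- `σ_j` commutes with `D_k` when `j ≥ k+2`. -/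
lemma comm_DD {n j : ℕ} : ∀ {k}, k + 2 ≤ j → j ≤ n - 1 →
    sigma n j * DD n k = DD n k * sigma n j := by
  intro k
  induction k with
  | zero => intro _ _; simp [DD]
  | succ k ih =>
      intro h1 h2
      have : sigma n (k+1) * sigma n j = sigma n j * sigma n (k+1) :=
        (rel_comm (by omega) (by omega) h2)
      calc sigma n j * DD n (k+1) = sigma n j * DD n k * sigma n (k+1) := by
            rw [DD]; group
        _ = DD n k * sigma n j * sigma n (k+1) := by rw [ih (by omega) h2]
        _ = DD n k * (sigma n (k+1) * sigma n j) := by rw [mul_assoc, ← this]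
        _ = DD n (k+1) * sigma n j := by rw [DD]; group

/-- push lemma: `σ_{i+1} D_c = D_c σ_i` for `1 ≤ i`, `i+1 ≤ c ≤ n-1`. -/
lemma push {n i : ℕ} (h1 : 1 ≤ i) : ∀ c, i + 1 ≤ c → c ≤ n - 1 →
    sigma n (i+1) * DD n c = DD n c * sigma n i := by
  intro c
  induction c with
  | zero => omega
  | succ c ih =>
      intro hc1 hc2
      rcases Nat.lt_or_ge i c with hlt | hge
      · -- i + 1 ≤ c
        have hcomm : sigma n i * sigma n (c+1) = sigma n (c+1) * sigma n i :=
          rel_comm h1 (by omega) hc2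
        calc sigma n (i+1) * DD n (c+1) = sigma n (i+1) * DD n c * sigma n (c+1) := by
              rw [DD]; group
          _ = DD n c * sigma n i * sigma n (c+1) := by rw [ih (by omega) (by omega)]
          _ = DD n c * sigma n (c+1) * sigma n i := by rw [mul_assoc, hcomm]; group
          _ = DD n (c+1) * sigma n i := by rw [DD]
      · -- c = i
        have hci : c = i := by omega
        subst hci
        have hDD : DD n c = DD n (c-1) * sigma n c := DD_succ' h1
        have hcomm : sigma n (c+1) * DD n (c-1) = DD n (c-1) * sigma n (c+1) :=
          comm_DD (by omega) hc2
        have hbr : sigma n c * sigma n (c+1) * sigma n c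
            = sigma n (c+1) * sigma n c * sigma n (c+1) := rel_braid h1 hc2
        calc sigma n (c+1) * DD n (c+1)
            = sigma n (c+1) * (DD n (c-1) * sigma n c) * sigma n (c+1) := by
              rw [DD, hDD]; group
          _ = DD n (c-1) * (sigma n (c+1) * sigma n c * sigma n (c+1)) := by
              rw [← mul_assoc, ← mul_assoc, hcomm]; group
          _ = DD n (c-1) * (sigma n c * sigma n (c+1) * sigma n c) := by rw [hbr]
          _ = (DD n (c-1) * sigma n c) * sigma n (c+1) * sigma n c := by group
          _ = DD n (c+1) * sigma n c := by rw [DD, hDD]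

/-- `σ₁ (D_k D_{k-1}) = (D_k D_{k-1}) σ_k` for `1 ≤ k ≤ n-1`. -/
lemma L1 {n : ℕ} : ∀ k, 1 ≤ k → k ≤ n - 1 →
    sigma n 1 * (DD n k * DD n (k-1)) = (DD n k * DD n (k-1)) * sigma n k := by
  intro k
  induction k with
  | zero => omega
  | succ k ih =>
      intro _ hk2
      rcases Nat.eq_zero_or_pos k with rfl | hk1
      · show sigma n 1 * (DD n 1 * DD n 0) = (DD n 1 * DD n 0) * sigma n 1
        simp [DD]
      · have IH := ih hk1 (by omega)
        set A := DD n (k-1) with hA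
        set x := sigma n k with hx
        set y := sigma n (k+1) with hy
        set o := sigma n 1 with ho
        have hDDk : DD n k = A * x := DD_succ' hk1
        have hDDk1 : DD n (k+1) = A * x * y := by rw [DD, hDDk]
        have hcm : y * A = A * y := comm_DD (by omega) hk2
        have hbr2 : x * (y * x) = y * (x * y) := by
          have := rel_braid hk1 hk2
          rw [← hx, ← hy] at this
          rw [← mul_assoc, this, mul_assoc]
        have hcm' : ∀ z, y * (A * z) = A * (y * z) := fun z => by
          rw [← mul_assoc, hcm, mul_assoc]
        have IH' : ∀ z, o * (A * (x * (A * z))) = A * (x * (A * (x * z))) := fun z => by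
          have h0 : o * (A * x * A) = A * x * A * x := by
            rw [← hDDk]; exact IH
          calc o * (A * (x * (A * z))) = (o * (A * x * A)) * z := by group
            _ = (A * x * A * x) * z := by rw [h0]
            _ = A * (x * (A * (x * z))) := by group
        have goal' : o * (A * (x * (y * (A * x)))) = A * (x * (y * (A * (x * y)))) := by
          calc o * (A * (x * (y * (A * x))))
              = o * (A * (x * (A * (y * x)))) := by rw [hcm' (x)]
            _ = A * (x * (A * (x * (y * x)))) := IH' (y*x)
            _ = A * (x * (A * (y * (x * y)))) := by rw [hbr2]
            _ = A * (x * (y * (A * (x * y)))) := by rw [hcm' (x*y)]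
        calc sigma n 1 * (DD n (k+1) * DD n ((k+1)-1))
            = o * (A * (x * (y * (A * x)))) := by
              rw [hDDk1]
              have : DD n ((k+1)-1) = A * x := by rw [Nat.add_sub_cancel]; exact hDDk
              rw [this, ← ho]; group
          _ = A * (x * (y * (A * (x * y)))) := goal'
          _ = (DD n (k+1) * DD n ((k+1)-1)) * sigma n (k+1) := by
              rw [hDDk1]
              have : DD n ((k+1)-1) = A * x := by rw [Nat.add_sub_cancel]; exact hDDk
              rw [this, ← hy]; group

end Dehornoy

namespace Dehornoy

lemma comm_Del {n j : ℕ} : ∀ {t}, t + 2 ≤ j → j ≤ n - 1 →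
    sigma n j * Del n t = Del n t * sigma n j := by
  intro t
  induction t with
  | zero => intro _ _; simp [Del]
  | succ t ih =>
      intro h1 h2
      calc sigma n j * Del n (t+1) = (sigma n j * DD n (t+1)) * Del n t := by
            rw [Del]; group
        _ = DD n (t+1) * (sigma n j * Del n t) := by rw [comm_DD (by omega) h2]; group
        _ = Del n (t+1) * sigma n j := by rw [ih (by omega) h2, Del]; group

/-- `σᵢ Del_t = Del_t σ_{t+1-i}` for `1 ≤ i ≤ t ≤ n-1`. -/
lemma conj_Del {n : ℕ} : ∀ t, t ≤ n - 1 → ∀ i, 1 ≤ i → i ≤ t →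
    sigma n i * Del n t = Del n t * sigma n (t+1-i) := by
  intro t
  induction t using Nat.strong_induction_on with
  | _ t IH =>
    intro ht i hi1 hi2
    rcases Nat.lt_or_ge 1 i with hgt | hle
    · -- i ≥ 2, t ≥ 2
      obtain ⟨t', rfl⟩ : ∃ t', t = t' + 1 := ⟨t - 1, by omega⟩
      have hpush : sigma n i * DD n (t'+1) = DD n (t'+1) * sigma n (i-1) := by
        have := push (i := i-1) (by omega) (t'+1) (by omega) ht
        rwa [show i - 1 + 1 = i by omega] at this
      have hIH := IH t' (by omega) (by omega) (i-1) (by omega) (by omega)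
      calc sigma n i * Del n (t'+1) = (sigma n i * DD n (t'+1)) * Del n t' := by
            rw [Del]; group
        _ = DD n (t'+1) * (sigma n (i-1) * Del n t') := by rw [hpush]; group
        _ = DD n (t'+1) * (Del n t' * sigma n (t'+1-(i-1))) := by rw [hIH]
        _ = Del n (t'+1) * sigma n (t'+1+1-i) := by
            rw [show t'+1-(i-1) = t'+1+1-i by omega, Del]; group
    · -- i = 1
      have hi : i = 1 := by omega
      subst hi
      rcases Nat.lt_or_ge t 2 with ht2 | ht2
      · -- t = 1
        have : t = 1 := by omega
        subst this
        show sigma n 1 * Del n 1 = Del n 1 * sigma n (1+1-1)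
        simp [Del, DD]
      · -- t ≥ 2
        obtain ⟨t', rfl⟩ : ∃ t', t = t' + 2 := ⟨t - 2, by omega⟩
        have hL1 : sigma n 1 * (DD n (t'+2) * DD n (t'+1))
            = (DD n (t'+2) * DD n (t'+1)) * sigma n (t'+2) := by
          have := L1 (t'+2) (by omega) ht
          rwa [show (t'+2)-1 = t'+1 by omega] at this
        have hcd : sigma n (t'+2) * Del n t' = Del n t' * sigma n (t'+2) :=
          comm_Del (by omega) ht
        calc sigma n 1 * Del n (t'+2)
            = (sigma n 1 * (DD n (t'+2) * DD n (t'+1))) * Del n t' := by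
              rw [Del, Del]; group
          _ = (DD n (t'+2) * DD n (t'+1)) * (sigma n (t'+2) * Del n t') := by
              rw [hL1]; group
          _ = (DD n (t'+2) * DD n (t'+1)) * (Del n t' * sigma n (t'+2)) := by rw [hcd]
          _ = Del n (t'+2) * sigma n (t'+2+1-1) := by
              rw [show t'+2+1-1 = t'+2 by omega, Del, Del]; group

lemma conj_delta {n i : ℕ} (hn : 2 ≤ n) (h1 : 1 ≤ i) (h2 : i ≤ n - 1) :
    sigma n i * delta n = delta n * sigma n (n - i) := by
  rw [delta_eq]
  have := conj_Del (n-1) le_rfl i h1 h2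
  rwa [show n - 1 + 1 - i = n - i by omega] at this

lemma central_sigma {n i : ℕ} (hn : 2 ≤ n) (h1 : 1 ≤ i) (h2 : i ≤ n - 1) :
    sigma n i * delta n ^ 2 = delta n ^ 2 * sigma n i := by
  have e1 := conj_delta hn h1 h2
  have e2 := conj_delta hn (i := n - i) (by omega) (by omega)
  rw [show n - (n - i) = i by omega] at e2
  calc sigma n i * delta n ^ 2 = (sigma n i * delta n) * delta n := by rw [pow_two]; group
    _ = delta n * (sigma n (n-i) * delta n) := by rw [e1]; group
    _ = delta n * (delta n * sigma n i) := by rw [e2]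
    _ = delta n ^ 2 * sigma n i := by rw [pow_two]; group

lemma of_eq_sigma {n : ℕ} (x : Fin (n-1)) :
    (PresentedGroup.of x : BraidGroup n) = sigma n ((x : ℕ) + 1) := by
  rw [sigma_eq_of (by omega) (by omega)]
  congr 1

lemma central_delta_sq {n : ℕ} (hn : 2 ≤ n) (g : BraidGroup n) :
    delta n ^ 2 * g = g * delta n ^ 2 := by
  have : g ∈ Subgroup.centralizer {delta n ^ 2} := by
    apply PresentedGroup.generated_by
    intro x
    rw [Subgroup.mem_centralizer_iff]
    intro h hh
    rw [Set.mem_singleton_iff] at hh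
    subst hh
    rw [of_eq_sigma]
    exact (central_sigma hn (by omega) (by omega)).symm
  exact Subgroup.mem_centralizer_iff.mp this (delta n ^ 2) rfl

lemma central_delta_even {n : ℕ} (hn : 2 ≤ n) (k : ℕ) (g : BraidGroup n) :
    delta n ^ (2*k) * g = g * delta n ^ (2*k) := by
  rw [pow_mul]
  induction k with
  | zero => simp
  | succ k ih =>
      rw [pow_succ]
      calc ((delta n ^ 2) ^ k * delta n ^ 2) * g
          = (delta n ^ 2) ^ k * (delta n ^ 2 * g) := by group
        _ = ((delta n ^ 2) ^ k * g) * delta n ^ 2 := by rw [central_delta_sq hn]; group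
        _ = g * ((delta n ^ 2) ^ k * delta n ^ 2) := by rw [ih]; group

end Dehornoy

namespace Dehornoy

/-- `g` has a positive valid word representative. -/
def PosRep (n : ℕ) (g : BraidGroup n) : Prop :=
  ∃ w, ValidWord n w ∧ (∀ p ∈ w, p.2 = true) ∧ wordEval n w = g

/-- `g` has a positive valid word representative containing `σ₁`. -/
def PosRep1 (n : ℕ) (g : BraidGroup n) : Prop :=
  ∃ w, ValidWord n w ∧ (∀ p ∈ w, p.2 = true) ∧ ((1, true) ∈ w) ∧ wordEval n w = g

lemma wordEval_append (n : ℕ) (w1 w2 : List (ℕ × Bool)) :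
    wordEval n (w1 ++ w2) = wordEval n w1 * wordEval n w2 := by
  simp [wordEval]

lemma posRep_one (n : ℕ) : PosRep n 1 := ⟨[], by simp [ValidWord], by simp, by simp [wordEval]⟩

lemma posRep_mul {n : ℕ} {g h : BraidGroup n} (hg : PosRep n g) (hh : PosRep n h) :
    PosRep n (g * h) := by
  obtain ⟨w1, v1, p1, e1⟩ := hg
  obtain ⟨w2, v2, p2, e2⟩ := hh
  refine ⟨w1 ++ w2, ?_, ?_, ?_⟩
  · intro p hp; rcases List.mem_append.mp hp with h' | h'
    exacts [v1 p h', v2 p h']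
  · intro p hp; rcases List.mem_append.mp hp with h' | h'
    exacts [p1 p h', p2 p h']
  · rw [wordEval_append, e1, e2]

lemma posRep1_posRep {n : ℕ} {g : BraidGroup n} (h : PosRep1 n g) : PosRep n g := by
  obtain ⟨w, v, p, _, e⟩ := h; exact ⟨w, v, p, e⟩

lemma posRep1_mul_right {n : ℕ} {g h : BraidGroup n} (hg : PosRep1 n g) (hh : PosRep n h) :
    PosRep1 n (g * h) := by
  obtain ⟨w1, v1, p1, m1, e1⟩ := hg
  obtain ⟨w2, v2, p2, e2⟩ := hh
  refine ⟨w1 ++ w2, ?_, ?_, List.mem_append.mpr (Or.inl m1), ?_⟩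
  · intro p hp; rcases List.mem_append.mp hp with h' | h'
    exacts [v1 p h', v2 p h']
  · intro p hp; rcases List.mem_append.mp hp with h' | h'
    exacts [p1 p h', p2 p h']
  · rw [wordEval_append, e1, e2]

lemma posRep1_mul_left {n : ℕ} {g h : BraidGroup n} (hg : PosRep n g) (hh : PosRep1 n h) :
    PosRep1 n (g * h) := by
  obtain ⟨w1, v1, p1, e1⟩ := hg
  obtain ⟨w2, v2, p2, m2, e2⟩ := hh
  refine ⟨w1 ++ w2, ?_, ?_, List.mem_append.mpr (Or.inr m2), ?_⟩
  · intro p hp; rcases List.mem_append.mp hp with h' | h'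
    exacts [v1 p h', v2 p h']
  · intro p hp; rcases List.mem_append.mp hp with h' | h'
    exacts [p1 p h', p2 p h']
  · rw [wordEval_append, e1, e2]

lemma posRep_sigma {n i : ℕ} (h1 : 1 ≤ i) (h2 : i ≤ n - 1) : PosRep n (sigma n i) := by
  refine ⟨[(i, true)], ?_, ?_, ?_⟩
  · intro p hp; simp at hp; subst hp; exact ⟨h1, h2⟩
  · intro p hp; simp at hp; subst hp; rfl
  · simp [wordEval]

lemma posRep_DD {n : ℕ} : ∀ k, k ≤ n - 1 → PosRep n (DD n k) := by
  intro k
  induction k with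
  | zero => intro _; exact posRep_one n
  | succ k ih =>
      intro h
      exact posRep_mul (ih (by omega)) (posRep_sigma (by omega) h)

lemma posRep_Del {n : ℕ} : ∀ t, t ≤ n - 1 → PosRep n (Del n t) := by
  intro t
  induction t with
  | zero => intro _; exact posRep_one n
  | succ t ih =>
      intro h
      exact posRep_mul (posRep_DD (t+1) h) (ih (by omega))

lemma DD_head {n : ℕ} : ∀ k, 1 ≤ k → k ≤ n - 1 →
    ∃ g, PosRep n g ∧ DD n k = sigma n 1 * g := by
  intro k
  induction k with
  | zero => omega
  | succ k ih =>
      intro _ hk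
      rcases Nat.eq_zero_or_pos k with rfl | hk1
      · exact ⟨1, posRep_one n, by simp [DD]⟩
      · obtain ⟨g, hg, he⟩ := ih hk1 (by omega)
        exact ⟨g * sigma n (k+1), posRep_mul hg (posRep_sigma (by omega) hk),
          by rw [DD, he]; group⟩

lemma posRep1_delta {n : ℕ} (hn : 2 ≤ n) : PosRep1 n (delta n) := by
  rw [delta_eq]
  obtain ⟨t, ht⟩ : ∃ t, n - 1 = t + 1 := ⟨n - 2, by omega⟩
  rw [ht]
  obtain ⟨g, hg, he⟩ := DD_head (n := n) (t+1) (by omega) (by omega)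
  show PosRep1 n (DD n (t+1) * Del n t)
  rw [he]
  have h1 : PosRep1 n (sigma n 1) := by
    refine ⟨[(1, true)], ?_, ?_, by simp, by simp [wordEval]⟩
    · intro p hp; simp at hp; subst hp; exact ⟨le_rfl, by omega⟩
    · intro p hp; simp at hp; subst hp; rfl
  rw [mul_assoc]
  exact posRep1_mul_right h1 (posRep_mul hg (posRep_Del t (by omega)))

lemma posRep_delta {n : ℕ} (hn : 2 ≤ n) : PosRep n (delta n) :=
  posRep1_posRep (posRep1_delta hn)

/-- `σᵢ⁻¹ Del_t` is positive for `1 ≤ i ≤ t`. -/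
lemma divis_Del {n : ℕ} : ∀ t, t ≤ n - 1 → ∀ i, 1 ≤ i → i ≤ t →
    PosRep n ((sigma n i)⁻¹ * Del n t) := by
  intro t
  induction t with
  | zero => omega
  | succ t ih =>
      intro ht i h1 h2
      rcases Nat.lt_or_ge 1 i with hgt | hle
      · -- i ≥ 2
        have hpush : sigma n i * DD n (t+1) = DD n (t+1) * sigma n (i-1) := by
          have := push (i := i-1) (by omega) (t+1) (by omega) ht
          rwa [show i - 1 + 1 = i by omega] at this
        have hiv : (sigma n i)⁻¹ * DD n (t+1) = DD n (t+1) * (sigma n (i-1))⁻¹ := by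
          rw [eq_mul_inv_iff_mul_eq, mul_assoc, ← hpush]; group
        have hIH := ih (by omega) (i-1) (by omega) (by omega)
        have key : (sigma n i)⁻¹ * Del n (t+1)
            = DD n (t+1) * ((sigma n (i-1))⁻¹ * Del n t) := by
          calc (sigma n i)⁻¹ * Del n (t+1)
              = ((sigma n i)⁻¹ * DD n (t+1)) * Del n t := by rw [Del]; group
            _ = DD n (t+1) * ((sigma n (i-1))⁻¹ * Del n t) := by rw [hiv]; group
        rw [key]
        exact posRep_mul (posRep_DD (t+1) ht) hIH
      · -- i = 1
        have hi : i = 1 := by omega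
        subst hi
        obtain ⟨g, hg, he⟩ := DD_head (n := n) (t+1) (by omega) ht
        have key : (sigma n 1)⁻¹ * Del n (t+1) = g * Del n t := by
          rw [Del, he]; group
        rw [key]
        exact posRep_mul hg (posRep_Del t (by omega))

lemma divis_delta {n i : ℕ} (hn : 2 ≤ n) (h1 : 1 ≤ i) (h2 : i ≤ n - 1) :
    PosRep n ((sigma n i)⁻¹ * delta n) := by
  rw [delta_eq]
  exact divis_Del (n-1) le_rfl i h1 h2

end Dehornoy

namespace Dehornoy

lemma sigmaPositive_of_posRep1 {n : ℕ} (hn : 2 ≤ n) {g : BraidGroup n}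
    (h : PosRep1 n g) : SigmaPositive n g := by
  obtain ⟨w, v, pos, mem, e⟩ := h
  refine ⟨w, v, e, 1, le_rfl, by omega, mem, fun p hp => (v p hp).1, fun hmem => ?_⟩
  have := pos _ hmem
  simp at this

/-- Core lemma: `Δ^{2ℓ+2} · (word of length ℓ)` is positively representable with a `σ₁`. -/
lemma main_pos {n : ℕ} (hn : 2 ≤ n) :
    ∀ u : List (ℕ × Bool), ValidWord n u →
      PosRep1 n (delta n ^ (2 * u.length + 2) * wordEval n u) := by
  intro u
  induction u with
  | nil =>
      intro _
      have : delta n ^ (2 * ([] : List (ℕ × Bool)).length + 2) * wordEval n []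
          = delta n * delta n := by
        simp only [List.length_nil, Nat.mul_zero, Nat.zero_add, wordEval, List.map_nil,
          List.prod_nil, mul_one, pow_two]
      rw [this]
      exact posRep1_mul_right (posRep1_delta hn) (posRep_delta hn)
  | cons p u ih =>
      intro hv
      have hvu : ValidWord n u := fun q hq => hv q (List.mem_cons_of_mem p hq)
      have hvp := hv p List.mem_cons_self
      have ihp := ih hvu
      set x : BraidGroup n := if p.2 then sigma n p.1 else (sigma n p.1)⁻¹ with hx
      have heval : wordEval n (p :: u) = x * wordEval n u := by
        simp [wordEval, hx]
      have hsplit : delta n ^ (2 * (p :: u).length + 2) * wordEval n (p :: u)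
          = (delta n ^ 2 * x) * (delta n ^ (2 * u.length + 2) * wordEval n u) := by
        rw [heval]
        have hlen : 2 * (p :: u).length + 2 = 2 + (2 * u.length + 2) := by
          simp [List.length_cons]; ring
        rw [hlen, pow_add]
        have hc : delta n ^ (2 * u.length + 2) * x = x * delta n ^ (2 * u.length + 2) := by
          have := central_delta_even hn (u.length + 1) x
          rwa [show 2 * (u.length + 1) = 2 * u.length + 2 by ring] at this
        calc delta n ^ 2 * delta n ^ (2 * u.length + 2) * (x * wordEval n u)
            = delta n ^ 2 * (delta n ^ (2 * u.length + 2) * x) * wordEval n u := by group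
          _ = delta n ^ 2 * (x * delta n ^ (2 * u.length + 2)) * wordEval n u := by rw [hc]
          _ = (delta n ^ 2 * x) * (delta n ^ (2 * u.length + 2) * wordEval n u) := by group
      rw [hsplit]
      have hhead : PosRep1 n (delta n ^ 2 * x) := by
        rcases Bool.eq_false_or_eq_true p.2 with hb | hb
        · have hx' : x = sigma n p.1 := by rw [hx, hb]; simp
          rw [hx', pow_two, mul_assoc]
          exact posRep1_mul_right (posRep1_delta hn)
            (posRep_mul (posRep_delta hn) (posRep_sigma hvp.1 hvp.2))
        · -- negative letter
          have hx' : x = (sigma n p.1)⁻¹ := by rw [hx, hb]; simp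
          have hcomm : delta n ^ 2 * x = ((sigma n p.1)⁻¹ * delta n) * delta n := by
            rw [hx', central_delta_sq hn, pow_two]; group
          rw [hcomm]
          exact posRep1_mul_left (divis_delta hn hvp.1 hvp.2) (posRep1_delta hn)
      exact posRep1_mul_right hhead (posRep1_posRep ihp)

/-- padding: more factors of `Δ²` keep positivity. -/
lemma main_pos_pad {n : ℕ} (hn : 2 ≤ n) (u : List (ℕ × Bool)) (hv : ValidWord n u)
    (m : ℕ) (hm : u.length ≤ m) :
    PosRep1 n (delta n ^ (2 * m + 2) * wordEval n u) := by
  obtain ⟨k, hk⟩ : ∃ k, m = u.length + k := ⟨m - u.length, by omega⟩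
  subst hk
  have : delta n ^ (2 * (u.length + k) + 2) * wordEval n u
      = delta n ^ (2 * k) * (delta n ^ (2 * u.length + 2) * wordEval n u) := by
    rw [← mul_assoc, ← pow_add]; ring_nf
  rw [this]
  have hpk : ∀ j, PosRep n (delta n ^ j) := by
    intro j
    induction j with
    | zero => simpa using posRep_one n
    | succ j ihj => rw [pow_succ]; exact posRep_mul ihj (posRep_delta hn)
  exact posRep1_mul_left (hpk (2*k)) (main_pos hn u hv)

/-- every braid is represented by a valid word. -/
lemma exists_word {n : ℕ} (β : BraidGroup n) :
    ∃ u, ValidWord n u ∧ wordEval n u = β := by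
  let H : Subgroup (BraidGroup n) :=
    { carrier := {g | ∃ u, ValidWord n u ∧ wordEval n u = g}
      one_mem' := ⟨[], by simp [ValidWord], by simp [wordEval]⟩
      mul_mem' := by
        rintro a b ⟨u, hu, rfl⟩ ⟨v, hv, rfl⟩
        refine ⟨u ++ v, ?_, (wordEval_append n u v)⟩
        intro p hp; rcases List.mem_append.mp hp with h' | h'
        exacts [hu p h', hv p h']
      inv_mem' := by
        rintro a ⟨u, hu, rfl⟩
        refine ⟨u.reverse.map (fun p => (p.1, !p.2)), ?_, ?_⟩
        · intro p hp
          simp only [List.mem_map, List.mem_reverse] at hp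
          obtain ⟨q, hq, rfl⟩ := hp
          exact hu q hq
        · induction u with
          | nil => simp [wordEval]
          | cons p u ihu =>
              have hvu : ValidWord n u := fun q hq => hu q (List.mem_cons_of_mem p hq)
              simp only [List.reverse_cons, List.map_append, List.map_cons, List.map_nil]
              rw [wordEval_append, ihu hvu]
              have : wordEval n [(p.1, !p.2)]
                  = (if p.2 then sigma n p.1 else (sigma n p.1)⁻¹)⁻¹ := by
                rcases Bool.eq_false_or_eq_true p.2 with hb | hb <;>
                  simp [wordEval, hb]
              rw [this]
              have : wordEval n (p :: u)
                  = (if p.2 then sigma n p.1 else (sigma n p.1)⁻¹) * wordEval n u := by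
                simp [wordEval]
              rw [this]
              group }
  have hβ : β ∈ H := by
    apply PresentedGroup.generated_by
    intro x
    refine ⟨[((x : ℕ) + 1, true)], ?_, ?_⟩
    · intro p hp; simp at hp; subst hp
      constructor
      · omega
      · have := x.isLt; omega
    · simp [wordEval]
      rw [of_eq_sigma]
  exact hβ

end Dehornoy

open Dehornoy in
/-- for every `n ≥ 2` and `β ∈ B_n` there is a non-negative integer `m` with
`Δ^{-2m-2} < β < Δ^{2m+2}` in the Dehornoy ordering; hence the Dehornoy floor exists. -/
theorem dehornoyFloor_exists (n : ℕ) (hn : 2 ≤ n) (β : BraidGroup n) :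
    ∃ m : ℕ, dlt n (delta n ^ (-(2 * (m : ℤ)) - 2)) β ∧
      dlt n β (delta n ^ (2 * (m : ℤ) + 2)) := by
  obtain ⟨u, hu, hue⟩ := Dehornoy.exists_word β
  obtain ⟨v, hv, hve⟩ := Dehornoy.exists_word β⁻¹
  set m := max u.length v.length with hm
  refine ⟨m, ?_, ?_⟩
  · show SigmaPositive n ((delta n ^ (-(2 * (m : ℤ)) - 2))⁻¹ * β)
    have hz : (delta n ^ (-(2 * (m : ℤ)) - 2))⁻¹ = delta n ^ (2 * m + 2) := by
      rw [← zpow_natCast, ← zpow_neg]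
      congr 1
      all_goals (push_cast; try ring)
    rw [hz, ← hue]
    exact Dehornoy.sigmaPositive_of_posRep1 hn
      (Dehornoy.main_pos_pad hn u hu m (le_max_left _ _))
  · show SigmaPositive n (β⁻¹ * delta n ^ (2 * (m : ℤ) + 2))
    have hz2 : delta n ^ (2 * (m : ℤ) + 2) = delta n ^ (2 * m + 2) := by
      rw [← zpow_natCast]
      congr 1
      all_goals (push_cast; try ring)
    have hc : β⁻¹ * delta n ^ (2 * m + 2) = delta n ^ (2 * m + 2) * β⁻¹ := by
      have := Dehornoy.central_delta_even hn (m + 1) β⁻¹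
      rw [show 2 * (m + 1) = 2 * m + 2 by ring] at this
      exact this.symm
    rw [hz2, hc, ← hve]
    exact Dehornoy.sigmaPositive_of_posRep1 hn
      (Dehornoy.main_pos_pad hn v hv m (le_max_right _ _))
end

section
/- If a braid β ∈ B_n is represented by a word in the letters σ₁^{±1},…,σ_{n−1}^{±1} which contains exactly s occurrences of the letter σ₁ and exactly k occurrences of the letter σ₁⁻¹, and max{s,k} ≥ 1, then the Dehornoy floor satisfies [β]_D < max{s,k}. -/
lemma rel_eq_one {n : ℕ} {r : FreeGroup (Fin (n-1))} (hr : r ∈ braidRels n) :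
    PresentedGroup.mk (braidRels n) r = 1 := by
  exact (QuotientGroup.eq_one_iff _).mpr (Subgroup.subset_normalClosure hr)

lemma sigma_eq_of {n i : ℕ} (h1 : 1 ≤ i) (h2 : i ≤ n - 1) :
    sigma n i = PresentedGroup.of (⟨i - 1, by omega⟩ : Fin (n - 1)) := by
  simp [sigma, h1, h2]

lemma braid_rel {n : ℕ} (i : ℕ) (h1 : 1 ≤ i) (h2 : i + 1 ≤ n - 1) :
    sigma n i * sigma n (i+1) * sigma n i = sigma n (i+1) * sigma n i * sigma n (i+1) := by
  have hii : i ≤ n - 1 := by omega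
  rw [sigma_eq_of h1 hii, sigma_eq_of (by omega : 1 ≤ i+1) h2]
  set a : Fin (n-1) := ⟨i - 1, by omega⟩
  set b : Fin (n-1) := ⟨i + 1 - 1, by omega⟩
  have hr : FreeGroup.of a * FreeGroup.of b * FreeGroup.of a *
      (FreeGroup.of b * FreeGroup.of a * FreeGroup.of b)⁻¹ ∈ braidRels n := by
    exact ⟨a, b, Or.inl ⟨by simp [a, b]; omega, rfl⟩⟩
  have h := rel_eq_one hr
  simp only [map_mul, map_inv, mul_inv_eq_one] at h
  simpa [PresentedGroup.of] using h

lemma comm_rel {n : ℕ} (i j : ℕ) (h1 : 1 ≤ i) (h2 : i + 2 ≤ j) (h3 : j ≤ n - 1) :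
    sigma n i * sigma n j = sigma n j * sigma n i := by
  rw [sigma_eq_of h1 (by omega), sigma_eq_of (by omega : 1 ≤ j) h3]
  set a : Fin (n-1) := ⟨i - 1, by omega⟩
  set b : Fin (n-1) := ⟨j - 1, by omega⟩
  have hr : FreeGroup.of a * FreeGroup.of b * (FreeGroup.of b * FreeGroup.of a)⁻¹ ∈ braidRels n := by
    exact ⟨a, b, Or.inr ⟨by simp [a, b]; omega, rfl⟩⟩
  have h := rel_eq_one hr
  simp only [map_mul, map_inv, mul_inv_eq_one] at h
  simpa [PresentedGroup.of] using h

def DD (n L : ℕ) : BraidGroup n := ((List.range L).map (fun t => sigma n (t+1))).prod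

def EE (n L : ℕ) : BraidGroup n := ((List.range L).reverse.map (fun t => sigma n (t+1))).prod

def Del (n m : ℕ) : BraidGroup n := ((List.range (m-1)).reverse.map (fun L => DD n (L+1))).prod

lemma DD_zero (n : ℕ) : DD n 0 = 1 := rfl

lemma DD_succ (n L : ℕ) : DD n (L+1) = DD n L * sigma n (L+1) := by
  simp [DD, List.range_succ]

lemma EE_zero (n : ℕ) : EE n 0 = 1 := rfl

lemma EE_succ (n L : ℕ) : EE n (L+1) = sigma n (L+1) * EE n L := by
  simp [EE, List.range_succ]

lemma Del_one (n : ℕ) : Del n 1 = 1 := rfl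

lemma Del_succ (n M : ℕ) : Del n (M+2) = DD n (M+1) * Del n (M+1) := by
  simp only [Del, Nat.add_sub_cancel, show M+2-1 = M+1 from rfl, List.range_succ]
  simp

lemma DD_comm_sigma {n : ℕ} (L j : ℕ) (h2 : L + 2 ≤ j) (h3 : j ≤ n - 1) :
    DD n L * sigma n j = sigma n j * DD n L := by
  induction L with
  | zero => simp [DD_zero]
  | succ L ih =>
      rw [DD_succ, mul_assoc, comm_rel (L+1) j (by omega) (by omega) h3, ← mul_assoc,
        ih (by omega), mul_assoc]

lemma EE_comm_sigma {n : ℕ} (L j : ℕ) (h2 : L + 2 ≤ j) (h3 : j ≤ n - 1) :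
    EE n L * sigma n j = sigma n j * EE n L := by
  induction L with
  | zero => simp [EE_zero]
  | succ L ih =>
      rw [EE_succ, mul_assoc, ih (by omega), ← mul_assoc,
        comm_rel (L+1) j (by omega) (by omega) h3, mul_assoc]

lemma Del_comm_sigma {n : ℕ} (m j : ℕ) (h2 : m + 1 ≤ j) (h3 : j ≤ n - 1) :
    Del n m * sigma n j = sigma n j * Del n m := by
  induction m with
  | zero => simp [show Del n 0 = 1 from rfl]
  | succ m ih =>
      rcases m with _ | M
      · simp [Del_one]
      · rw [Del_succ, mul_assoc, ih (by omega), ← mul_assoc,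
          DD_comm_sigma (M+1) j (by omega) h3, mul_assoc]

lemma DD_sigma {n : ℕ} (L i : ℕ) (h1 : 1 ≤ i) (h2 : i + 1 ≤ L) (h3 : L ≤ n - 1) :
    DD n L * sigma n i = sigma n (i+1) * DD n L := by
  induction L using Nat.strong_induction_on with
  | _ L ih =>
    rcases Nat.lt_or_ge (i+1) L with hlt | hge
    · -- i + 1 < L, so i ≤ L - 2; use recursion on L = L'+1
      obtain ⟨L', rfl⟩ : ∃ L', L = L' + 1 := ⟨L - 1, by omega⟩
      rw [DD_succ, mul_assoc, ← comm_rel i (L'+1) h1 (by omega) h3, ← mul_assoc,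
        ih L' (by omega) (by omega) (by omega), mul_assoc]
    · -- i + 1 = L
      have hL : L = i + 1 := by omega
      subst hL
      obtain ⟨M, rfl⟩ : ∃ M, i = M + 1 := ⟨i - 1, by omega⟩
      · -- i = M+1, L = M+2
        rw [DD_succ, DD_succ]
        calc DD n M * sigma n (M+1) * sigma n (M+2) * sigma n (M+1)
            = DD n M * (sigma n (M+1) * sigma n (M+2) * sigma n (M+1)) := by
              simp [mul_assoc]
          _ = DD n M * (sigma n (M+2) * sigma n (M+1) * sigma n (M+2)) := by
              rw [braid_rel (M+1) (by omega) (by omega)]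
          _ = sigma n (M+2) * (DD n M * sigma n (M+1) * sigma n (M+2)) := by
              rw [show DD n M * (sigma n (M+2) * sigma n (M+1) * sigma n (M+2))
                  = (DD n M * sigma n (M+2)) * (sigma n (M+1) * sigma n (M+2)) by
                    simp [mul_assoc],
                DD_comm_sigma M (M+2) (by omega) (by omega)]
              simp [mul_assoc]

lemma EE_sigma {n : ℕ} (L : ℕ) (h2 : 2 ≤ L) (h3 : L ≤ n - 1) :
    EE n L * sigma n L = sigma n (L-1) * EE n L := by
  obtain ⟨M, rfl⟩ : ∃ M, L = M + 2 := ⟨L - 2, by omega⟩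
  rw [EE_succ, EE_succ]
  calc sigma n (M+2) * (sigma n (M+1) * EE n M) * sigma n (M+2)
      = sigma n (M+2) * sigma n (M+1) * (EE n M * sigma n (M+2)) := by simp [mul_assoc]
    _ = sigma n (M+2) * sigma n (M+1) * sigma n (M+2) * EE n M := by
        rw [EE_comm_sigma M (M+2) (by omega) h3]; simp [mul_assoc]
    _ = sigma n (M+1) * sigma n (M+2) * sigma n (M+1) * EE n M := by
        rw [show sigma n (M+2) * sigma n (M+1) * sigma n (M+2)
            = sigma n (M+1) * sigma n (M+2) * sigma n (M+1) from
          (braid_rel (M+1) (by omega) (by omega)).symm]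
    _ = sigma n (M+2-1) * (sigma n (M+2) * (sigma n (M+1) * EE n M)) := by
        show _ = sigma n (M+1) * (sigma n (M+2) * (sigma n (M+1) * EE n M))
        simp [mul_assoc]

lemma Del_T {n : ℕ} : ∀ m, m ≤ n - 1 → Del n (m+1) = Del n m * EE n m := by
  intro m
  induction m using Nat.strong_induction_on with
  | _ m ih =>
    intro hm
    match m with
    | 0 => simp [Del_one, show Del n 0 = 1 from rfl, EE_zero]
    | 1 => simp [Del_succ, Del_one, EE_succ, EE_zero, DD_succ, DD_zero]
    | (M+2) =>
      -- Del (M+3) = DD (M+2) * Del (M+2); want = Del (M+2) * EE (M+2)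
      rw [Del_succ]
      have key : DD n (M+2) * Del n (M+2) = Del n (M+2) * EE n (M+2) := by
        have hDel : Del n (M+2) = DD n (M+1) * Del n (M+1) := Del_succ n M
        have hT : Del n (M+1) = Del n M * EE n M := ih M (by omega) (by omega)
        -- DD (M+2) = DD (M+1) * σ_{M+2}
        rw [hDel, DD_succ]
        -- σ_{M+2} * DD (M+1) = DD M * σ_{M+2} * σ_{M+1}
        have h1 : sigma n (M+2) * DD n (M+1) = DD n M * (sigma n (M+2) * sigma n (M+1)) := by
          rw [DD_succ, ← mul_assoc, ← DD_comm_sigma M (M+2) (by omega) hm, mul_assoc]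
        -- σ_{M+1} * Del (M+1) = Del M * EE (M+1)
        have h2 : sigma n (M+1) * Del n (M+1) = Del n M * EE n (M+1) := by
          rw [hT, ← mul_assoc, ← Del_comm_sigma M (M+1) (by omega) (by omega), mul_assoc,
            ← EE_succ]
        -- σ_{M+2} * (Del M * EE (M+1)) = Del M * EE (M+2)
        have h3 : sigma n (M+2) * (Del n M * EE n (M+1)) = Del n M * EE n (M+2) := by
          rw [← mul_assoc, ← Del_comm_sigma M (M+2) (by omega) hm, mul_assoc, ← EE_succ]
        calc DD n (M+1) * sigma n (M+2) * (DD n (M+1) * Del n (M+1))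
            = DD n (M+1) * (sigma n (M+2) * DD n (M+1)) * Del n (M+1) := by
              simp [mul_assoc]
          _ = DD n (M+1) * (DD n M * (sigma n (M+2) * sigma n (M+1))) * Del n (M+1) := by
              rw [h1]
          _ = DD n (M+1) * DD n M * (sigma n (M+2) * (sigma n (M+1) * Del n (M+1))) := by
              simp [mul_assoc]
          _ = DD n (M+1) * DD n M * (sigma n (M+2) * (Del n M * EE n (M+1))) := by rw [h2]
          _ = DD n (M+1) * DD n M * (Del n M * EE n (M+2)) := by rw [h3]
          _ = DD n (M+1) * (DD n M * Del n M) * EE n (M+2) := by simp [mul_assoc]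
          _ = DD n (M+1) * Del n (M+1) * EE n (M+2) := by
              rcases M with _ | M'
              · simp [Del_one, show Del n 0 = 1 from rfl, DD_succ, DD_zero]
              · rw [← Del_succ]
      exact key

lemma Del_flip {n : ℕ} : ∀ m, m ≤ n → ∀ i, 1 ≤ i → i + 1 ≤ m →
    Del n m * sigma n i = sigma n (m-i) * Del n m := by
  intro m
  induction m using Nat.strong_induction_on with
  | _ m ih =>
    intro hm i hi1 hi2
    obtain ⟨M0, rfl⟩ : ∃ M0, m = M0 + 2 := ⟨m - 2, by omega⟩
    rcases M0 with _ | M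
    · have hi : i = 1 := by omega
      subst hi
      simp [Del_succ, Del_one, DD_succ, DD_zero]
    · 
      have hDel : Del n (M+3) = DD n (M+2) * Del n (M+2) := Del_succ n (M+1)
      rcases Nat.lt_or_ge (i+1) (M+3) with hlt | hge
      · -- i ≤ M+1: use inner flip then DD_sigma
        have hflip := ih (M+2) (by omega) (by omega) i hi1 (by omega)
        have hDD := DD_sigma (n:=n) (M+2) (M+2-i) (by omega) (by omega) (by omega)
        rw [hDel, mul_assoc, hflip, ← mul_assoc, hDD, mul_assoc]
        have : M + 2 - i + 1 = M + 3 - i := by omega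
        rw [this]
      · -- i = M+2
        have hi : i = M + 2 := by omega
        subst hi
        have hT : Del n (M+3) = Del n (M+2) * EE n (M+2) := Del_T (n:=n) (M+2) (by omega)
        have hE := EE_sigma (M+2) (by omega) (by omega : M+2 ≤ n-1)
        have hflip := ih (M+2) (by omega) (by omega) (M+1) (by omega) (by omega)
        rw [hT, mul_assoc, hE, ← mul_assoc]
        have h21 : M + 2 - 1 = M + 1 := by omega
        have h22 : M + 2 - (M+1) = 1 := by omega
        rw [h21, hflip, h22, mul_assoc, ← hT]
        have : M + 3 - (M+2) = 1 := by omega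
        rw [this]

lemma delta_eq_Del (n : ℕ) : delta n = Del n n := rfl

lemma delta_flip {n : ℕ} (i : ℕ) (h1 : 1 ≤ i) (h2 : i ≤ n - 1) :
    delta n * sigma n i = sigma n (n-i) * delta n := by
  rw [delta_eq_Del]
  exact Del_flip n le_rfl i h1 (by omega)

lemma deltaSq_comm_sigma {n : ℕ} (i : ℕ) :
    delta n ^ 2 * sigma n i = sigma n i * delta n ^ 2 := by
  by_cases h : 1 ≤ i ∧ i ≤ n - 1
  · have h2 : n - i ≥ 1 := by omega
    have h3 : n - i ≤ n - 1 := by omega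
    rw [pow_two, mul_assoc, delta_flip i h.1 h.2, ← mul_assoc,
      delta_flip (n-i) h2 h3, show n - (n - i) = i by omega, mul_assoc]
  · simp [sigma, h]

lemma deltaSq_central {n : ℕ} (g : BraidGroup n) :
    delta n ^ 2 * g = g * delta n ^ 2 := by
  have hmem : g ∈ Subgroup.centralizer {delta n ^ 2} := by
    apply PresentedGroup.generated_by
    intro j
    rw [Subgroup.mem_centralizer_singleton_iff]
    have hj : (1 : ℕ) ≤ (j : ℕ) + 1 ∧ (j : ℕ) + 1 ≤ n - 1 := ⟨by omega, by omega⟩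
    have : PresentedGroup.of j = sigma n ((j : ℕ) + 1) := by
      rw [sigma_eq_of hj.1 hj.2]
      congr 1
    rw [this]
    exact (deltaSq_comm_sigma _).symm
  exact (Subgroup.mem_centralizer_singleton_iff.mp hmem).symm

lemma wordEval_nil (n : ℕ) : wordEval n [] = 1 := rfl

lemma wordEval_cons (n : ℕ) (p : ℕ × Bool) (w : List (ℕ × Bool)) :
    wordEval n (p :: w) = (if p.2 then sigma n p.1 else (sigma n p.1)⁻¹) * wordEval n w := by
  simp [wordEval]

lemma wordEval_append (n : ℕ) (u v : List (ℕ × Bool)) :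
    wordEval n (u ++ v) = wordEval n u * wordEval n v := by
  simp [wordEval]

lemma wordEval_flatten (n : ℕ) (ll : List (List (ℕ × Bool))) :
    wordEval n ll.flatten = (ll.map (wordEval n)).prod := by
  simp only [wordEval, List.map_flatten, List.prod_flatten, List.map_map]
  rfl

def dword (n : ℕ) : List (ℕ × Bool) :=
  ((List.range (n-1)).reverse.map (fun L => (List.range (L+1)).map (fun i => (i+1, true)))).flatten

lemma wordEval_dword (n : ℕ) : wordEval n (dword n) = delta n := by
  rw [dword, wordEval_flatten, delta]
  congr 1
  rw [List.map_map]
  apply List.map_congr_left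
  intro L _
  show wordEval n (List.map (fun i => (i+1, true)) (List.range (L+1))) = _
  rw [wordEval, List.map_map]
  congr 1

lemma dword_mem {n : ℕ} {p : ℕ × Bool} (hp : p ∈ dword n) :
    p.2 = true ∧ 1 ≤ p.1 ∧ p.1 ≤ n - 1 := by
  simp only [dword, List.mem_flatten, List.mem_map, List.mem_reverse, List.mem_range] at hp
  obtain ⟨l, ⟨L, hL, rfl⟩, hpl⟩ := hp
  simp only [List.mem_map, List.mem_range] at hpl
  obtain ⟨i, hi, rfl⟩ := hpl
  exact ⟨rfl, by omega, by omega⟩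

lemma one_mem_dword {n : ℕ} (hn : 2 ≤ n) : (1, true) ∈ dword n := by
  simp only [dword, List.mem_flatten, List.mem_map, List.mem_reverse, List.mem_range]
  exact ⟨(List.range (0+1)).map (fun i => (i+1, true)), ⟨0, by omega, rfl⟩, by simp⟩

lemma dword_eq_cons {n : ℕ} (hn : 2 ≤ n) : dword n = (1, true) :: (dword n).tail := by
  obtain ⟨m, hm⟩ : ∃ m, n - 1 = m + 1 := ⟨n - 2, by omega⟩
  rw [dword, hm, List.range_succ, List.reverse_append]
  simp only [List.reverse_cons, List.reverse_nil, List.nil_append, List.map_append,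
    List.map_cons, List.map_nil, List.flatten_append, List.flatten_cons, List.flatten_nil]
  rw [List.range_succ_eq_map]
  simp

def negword (n : ℕ) : List (ℕ × Bool) := (dword n).tail ++ dword n

lemma wordEval_negword {n : ℕ} (hn : 2 ≤ n) :
    wordEval n (negword n) = (sigma n 1)⁻¹ * delta n ^ 2 := by
  have h := wordEval_dword n
  rw [dword_eq_cons hn, wordEval_cons] at h
  simp only [if_true] at h
  have ht : wordEval n (dword n).tail = (sigma n 1)⁻¹ * delta n := by
    rw [← h, ← mul_assoc, inv_mul_cancel, one_mul]
  rw [negword, wordEval_append, ht, wordEval_dword, pow_two, mul_assoc]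

lemma negword_mem {n : ℕ} {p : ℕ × Bool} (hp : p ∈ negword n) :
    p.2 = true ∧ 1 ≤ p.1 ∧ p.1 ≤ n - 1 := by
  rw [negword, List.mem_append] at hp
  rcases hp with hp | hp
  · exact dword_mem (List.mem_of_mem_tail hp)
  · exact dword_mem hp

lemma one_mem_negword {n : ℕ} (hn : 2 ≤ n) : (1, true) ∈ negword n := by
  rw [negword, List.mem_append]
  exact Or.inr (one_mem_dword hn)

def posrep (n : ℕ) (w : List (ℕ × Bool)) : List (ℕ × Bool) :=
  w.flatMap (fun p => if p = (1, false) then negword n else [p])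

lemma deltaSqPow_comm {n : ℕ} (c : ℕ) (g : BraidGroup n) :
    (delta n ^ 2) ^ c * g = g * (delta n ^ 2) ^ c :=
  Commute.pow_left (deltaSq_central g) c

lemma wordEval_posrep {n : ℕ} (hn : 2 ≤ n) (w : List (ℕ × Bool)) :
    wordEval n (posrep n w) = (delta n ^ 2) ^ (w.count (1, false)) * wordEval n w := by
  induction w with
  | nil => simp [posrep, wordEval_nil]
  | cons p w ih =>
      rw [posrep, List.flatMap_cons, wordEval_append, ← posrep, ih]
      by_cases hp : p = (1, false)
      · subst hp
        rw [if_pos rfl, wordEval_negword hn, List.count_cons_self, wordEval_cons]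
        simp only [Bool.false_eq_true, if_false]
        rw [show (sigma n 1)⁻¹ * delta n ^ 2 = delta n ^ 2 * (sigma n 1)⁻¹ from
            (deltaSq_central _).symm,
          pow_succ' (delta n ^ 2) (List.count (1, false) w)]
        simp only [mul_assoc]
        congr 1
        rw [← mul_assoc, show (sigma n 1)⁻¹ * (delta n ^ 2) ^ List.count (1, false) w
            = (delta n ^ 2) ^ List.count (1, false) w * (sigma n 1)⁻¹ from
            (deltaSqPow_comm _ _).symm, mul_assoc]
      · rw [if_neg hp, List.count_cons_of_ne hp]
        rw [wordEval_cons, wordEval_cons, wordEval_nil, mul_one, ← mul_assoc,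
          ← deltaSqPow_comm, mul_assoc]

lemma posrep_mem {n : ℕ} {w : List (ℕ × Bool)} {p : ℕ × Bool} (hp : p ∈ posrep n w) :
    p ∈ negword n ∨ (p ∈ w ∧ p ≠ (1, false)) := by
  rw [posrep, List.mem_flatMap] at hp
  obtain ⟨q, hq, hpq⟩ := hp
  by_cases h : q = (1, false)
  · rw [if_pos h] at hpq; exact Or.inl hpq
  · rw [if_neg h] at hpq
    simp only [List.mem_singleton] at hpq
    subst hpq
    exact Or.inr ⟨hq, h⟩

lemma main_pos {n : ℕ} (hn : 2 ≤ n) (w : List (ℕ × Bool)) (hw : ValidWord n w)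
    (c : ℕ) (hc1 : 1 ≤ c) (hkc : w.count (1, false) ≤ c) :
    SigmaPositive n (delta n ^ (2 * c) * wordEval n w) := by
  set k := w.count (1, false) with hk
  refine ⟨(List.replicate (c - k) (dword n ++ dword n)).flatten ++ posrep n w, ?_, ?_, 1, le_rfl,
    by omega, ?_, ?_, ?_⟩
  · -- valid
    intro p hp
    rw [List.mem_append] at hp
    rcases hp with hp | hp
    · rw [List.mem_flatten] at hp
      obtain ⟨l, hl, hpl⟩ := hp
      rw [List.eq_of_mem_replicate hl, List.mem_append] at hpl
      rcases hpl with h | h <;> exact (dword_mem h).2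
    · rcases posrep_mem hp with h | h
      · exact (negword_mem h).2
      · exact hw p h.1
  · -- evaluation
    rw [wordEval_append, wordEval_flatten, wordEval_posrep hn w, ← hk]
    have hrep : ((List.replicate (c - k) (dword n ++ dword n)).map (wordEval n)).prod
        = (delta n ^ 2) ^ (c - k) := by
      rw [List.map_replicate, List.prod_replicate, wordEval_append, wordEval_dword, pow_two]
    rw [hrep, ← mul_assoc, ← pow_add, show c - k + k = c by omega, ← pow_mul]
  · -- contains (1, true)
    rw [List.mem_append]
    rcases Nat.lt_or_ge k c with hlt | hge
    · left
      rw [List.mem_flatten]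
      refine ⟨dword n ++ dword n, ?_, List.mem_append.mpr (Or.inl (one_mem_dword hn))⟩
      exact List.mem_replicate.mpr ⟨by omega, rfl⟩
    · right
      have hkpos : 1 ≤ k := by omega
      have hmem : (1, false) ∈ w := by
        rw [← List.count_pos_iff]
        omega
      rw [posrep, List.mem_flatMap]
      exact ⟨(1, false), hmem, by rw [if_pos rfl]; exact one_mem_negword hn⟩
  · -- all letters ≥ 1
    intro p hp
    rw [List.mem_append] at hp
    rcases hp with hp | hp
    · rw [List.mem_flatten] at hp
      obtain ⟨l, hl, hpl⟩ := hp
      rw [List.eq_of_mem_replicate hl, List.mem_append] at hpl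
      rcases hpl with h | h <;> exact (dword_mem h).2.1
    · rcases posrep_mem hp with h | h
      · exact (negword_mem h).2.1
      · exact (hw p h.1).1
  · -- no (1, false)
    intro hmem
    rw [List.mem_append] at hmem
    rcases hmem with hp | hp
    · rw [List.mem_flatten] at hp
      obtain ⟨l, hl, hpl⟩ := hp
      rw [List.eq_of_mem_replicate hl, List.mem_append] at hpl
      rcases hpl with h | h <;> simpa using (dword_mem h).1
    · rcases posrep_mem hp with h | h
      · simpa using (negword_mem h).1
      · exact h.2 rfl

def winv (w : List (ℕ × Bool)) : List (ℕ × Bool) := (w.map (fun p => (p.1, !p.2))).reverse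

lemma wordEval_winv (n : ℕ) (w : List (ℕ × Bool)) :
    wordEval n (winv w) = (wordEval n w)⁻¹ := by
  induction w with
  | nil => simp [winv, wordEval_nil]
  | cons p w ih =>
      have hlet : wordEval n [(p.1, !p.2)]
          = (if p.2 then sigma n p.1 else (sigma n p.1)⁻¹)⁻¹ := by
        rcases p with ⟨i, b⟩
        cases b <;> simp [wordEval_cons, wordEval_nil]
      rw [winv, List.map_cons, List.reverse_cons, wordEval_append, ← winv, ih, hlet,
        wordEval_cons, mul_inv_rev]

lemma winv_valid {n : ℕ} {w : List (ℕ × Bool)} (hw : ValidWord n w) : ValidWord n (winv w) := by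
  intro p hp
  rw [winv, List.mem_reverse, List.mem_map] at hp
  obtain ⟨q, hq, rfl⟩ := hp
  exact hw q hq

lemma winv_count {w : List (ℕ × Bool)} :
    (winv w).count (1, false) = w.count (1, true) := by
  rw [winv, List.count_reverse]
  induction w with
  | nil => rfl
  | cons p w ih =>
      rw [List.map_cons, List.count_cons, List.count_cons, ih]
      congr 1
      rcases p with ⟨i, b⟩
      cases b <;> simp

/-- if `β ∈ B_n` is represented by a word in the letters `σ₁^{±1}, …, σ_{n-1}^{±1}`
containing exactly `s` occurrences of `σ₁` and exactly `k` occurrences of `σ₁⁻¹`, with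
`max s k ≥ 1`, then `[β]_D < max s k`. -/
theorem dFloor_lt_max_of_word (n : ℕ) (β : BraidGroup n)
    (w : List (ℕ × Bool)) (s k : ℕ)
    (hw : ValidWord n w) (heval : wordEval n w = β)
    (hs : w.count (1, true) = s) (hk : w.count (1, false) = k)
    (hmax : 1 ≤ max s k) :
    dFloor n β < max s k := by
  rcases Nat.lt_or_ge n 2 with hn | hn
  · exfalso
    have hwnil : w = [] := by
      cases w with
      | nil => rfl
      | cons p w' =>
          have := hw p (by simp)
          omega
    subst hwnil
    simp only [List.count_nil] at hs hk
    omega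
  · set c := max s k with hc
    have hc1 : 1 ≤ c := hmax
    have hsle : s ≤ c := le_max_left s k
    have hkle : k ≤ c := le_max_right s k
    have hmem : (c - 1) ∈ {m : ℕ | dlt n (delta n ^ (-(2 * (m : ℤ)) - 2)) β ∧
        dlt n β (delta n ^ (2 * (m : ℤ) + 2))} := by
      constructor
      · show SigmaPositive n ((delta n ^ (-(2 * ((c - 1 : ℕ) : ℤ)) - 2))⁻¹ * β)
        have hpow : (delta n ^ (-(2 * ((c - 1 : ℕ) : ℤ)) - 2))⁻¹
            = delta n ^ (2 * c) := by
          rw [← zpow_neg]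
          have : -(-(2 * ((c - 1 : ℕ) : ℤ)) - 2) = ((2 * c : ℕ) : ℤ) := by omega
          rw [this, zpow_natCast]
        rw [hpow, ← heval]
        exact main_pos hn w hw c hc1 (by omega)
      · show SigmaPositive n (β⁻¹ * delta n ^ (2 * ((c - 1 : ℕ) : ℤ) + 2))
        have hexp : (2 * ((c - 1 : ℕ) : ℤ) + 2) = ((2 * c : ℕ) : ℤ) := by omega
        rw [hexp, zpow_natCast]
        have hcomm : β⁻¹ * delta n ^ (2 * c) = delta n ^ (2 * c) * β⁻¹ := by
          rw [show delta n ^ (2 * c) = (delta n ^ 2) ^ c from pow_mul _ 2 c,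
            ← deltaSqPow_comm]
        rw [hcomm, ← heval, ← wordEval_winv]
        exact main_pos hn (winv w) (winv_valid hw) c hc1 (by rw [winv_count]; omega)
    have hle : dFloor n β ≤ c - 1 := Nat.sInf_le hmem
    omega
end

section
/- For all braids α, β ∈ B_n, the Dehornoy floor is subadditive up to 1: [αβ]_D ≤ 1 + [α]_D + [β]_D. -/
namespace BraidProof

variable {n : ℕ}

lemma mk_rel_one {r : FreeGroup (Fin (n-1))} (hr : r ∈ braidRels n) :
    PresentedGroup.mk (braidRels n) r = 1 :=
  (QuotientGroup.eq_one_iff r).2 (Subgroup.subset_normalClosure hr)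

lemma of_braid {i j : Fin (n-1)} (h : (i:ℕ) + 1 = j) :
    (PresentedGroup.of i : BraidGroup n) * PresentedGroup.of j * PresentedGroup.of i =
      PresentedGroup.of j * PresentedGroup.of i * PresentedGroup.of j := by
  have h1 := mk_rel_one (n := n) (r := FreeGroup.of i * FreeGroup.of j * FreeGroup.of i *
          (FreeGroup.of j * FreeGroup.of i * FreeGroup.of j)⁻¹) ⟨i, j, Or.inl ⟨h, rfl⟩⟩
  rw [map_mul, map_inv, mul_inv_eq_one] at h1
  simpa [map_mul, PresentedGroup.of] using h1

lemma of_comm {i j : Fin (n-1)} (h : (i:ℕ) + 2 ≤ j) :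
    (PresentedGroup.of i : BraidGroup n) * PresentedGroup.of j =
      PresentedGroup.of j * PresentedGroup.of i := by
  have h1 := mk_rel_one (n := n) (r := FreeGroup.of i * FreeGroup.of j *
          (FreeGroup.of j * FreeGroup.of i)⁻¹) ⟨i, j, Or.inr ⟨h, rfl⟩⟩
  rw [map_mul, map_inv, mul_inv_eq_one] at h1
  simpa [map_mul, PresentedGroup.of] using h1

lemma sigma_eq_of {i : ℕ} (h1 : 1 ≤ i) (h2 : i ≤ n-1) :
    sigma n i = PresentedGroup.of (⟨i-1, by omega⟩ : Fin (n-1)) := dif_pos ⟨h1, h2⟩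

lemma of_eq_sigma (x : Fin (n-1)) : PresentedGroup.of x = sigma n (x.1+1) := by
  have hx := x.2
  rw [sigma_eq_of (by omega) (by omega)]
  have h : (⟨x.1+1-1, by omega⟩ : Fin (n-1)) = x := Fin.ext (by simp)
  rw [h]

lemma sigma_braid {i : ℕ} (h1 : 1 ≤ i) (h2 : i + 1 ≤ n-1) :
    sigma n i * sigma n (i+1) * sigma n i = sigma n (i+1) * sigma n i * sigma n (i+1) := by
  rw [sigma_eq_of h1 (by omega), sigma_eq_of (by omega) h2]
  exact of_braid (by simp; omega)

lemma sigma_comm {i j : ℕ} (h1 : 1 ≤ i) (h2 : i + 2 ≤ j) (h3 : j ≤ n-1) :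
    sigma n i * sigma n j = sigma n j * sigma n i := by
  rw [sigma_eq_of h1 (by omega), sigma_eq_of (by omega) h3]
  exact of_comm (by simp; omega)

end BraidProof
namespace BraidProof

def Dw (k : ℕ) : List (ℕ × Bool) := (List.range k).map (fun i => (i+1, true))

def Ew : ℕ → List (ℕ × Bool)
  | 0 => []
  | k+1 => (k+1, true) :: Ew k

def Delw : ℕ → List (ℕ × Bool)
  | 0 => []
  | k+1 => Dw k ++ Delw k

lemma wordEval_nil : wordEval n [] = 1 := rfl

lemma wordEval_cons (p : ℕ × Bool) (t : List (ℕ × Bool)) :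
    wordEval n (p :: t) =
      (if p.2 then sigma n p.1 else (sigma n p.1)⁻¹) * wordEval n t := by
  simp [wordEval]

lemma wordEval_cons_true (j : ℕ) (t : List (ℕ × Bool)) :
    wordEval n ((j, true) :: t) = sigma n j * wordEval n t := by
  simp [wordEval]

lemma wordEval_append (a b : List (ℕ × Bool)) :
    wordEval n (a ++ b) = wordEval n a * wordEval n b := by
  simp [wordEval]

lemma Dw_succ (k : ℕ) : Dw (k+1) = Dw k ++ [(k+1, true)] := by
  simp [Dw, List.range_succ]

lemma wordEval_Dw_succ (k : ℕ) :
    wordEval n (Dw (k+1)) = wordEval n (Dw k) * sigma n (k+1) := by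
  rw [Dw_succ, wordEval_append, wordEval_cons_true, wordEval_nil, mul_one]

lemma mem_Dw {k : ℕ} {p : ℕ × Bool} (hp : p ∈ Dw k) :
    1 ≤ p.1 ∧ p.1 ≤ k ∧ p.2 = true := by
  simp only [Dw, List.mem_map, List.mem_range] at hp
  obtain ⟨i, hi, rfl⟩ := hp
  exact ⟨by omega, by omega, rfl⟩

lemma mem_Ew : ∀ {k : ℕ} {p : ℕ × Bool}, p ∈ Ew k → 1 ≤ p.1 ∧ p.1 ≤ k ∧ p.2 = true
  | 0, p, hp => by simp [Ew] at hp
  | k+1, p, hp => by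
      rcases List.mem_cons.1 hp with h | h
      · subst h; exact ⟨by omega, by omega, rfl⟩
      · have := mem_Ew h
        exact ⟨this.1, by omega, this.2.2⟩

lemma mem_Delw : ∀ {k : ℕ} {p : ℕ × Bool}, p ∈ Delw k → 1 ≤ p.1 ∧ p.1 + 1 ≤ k ∧ p.2 = true
  | 0, p, hp => by simp [Delw] at hp
  | k+1, p, hp => by
      rcases List.mem_append.1 hp with h | h
      · have := mem_Dw h
        exact ⟨this.1, by omega, this.2.2⟩
      · have := mem_Delw h
        exact ⟨this.1, by omega, this.2.2⟩

lemma commute_sigma_sigma {i j : ℕ} (hi : 1 ≤ i) (hj : 1 ≤ j)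
    (hij : i + 2 ≤ j ∨ j + 2 ≤ i) (hi' : i ≤ n-1) (hj' : j ≤ n-1) :
    Commute (sigma n i) (sigma n j) := by
  rcases hij with h | h
  · exact sigma_comm hi h hj'
  · exact (sigma_comm hj h hi').symm

lemma commute_sigma_word {j : ℕ} (hj : 1 ≤ j) (hj' : j ≤ n-1) {w : List (ℕ × Bool)}
    (hw : ∀ p ∈ w, 1 ≤ p.1 ∧ p.1 ≤ n-1 ∧ (p.1 + 2 ≤ j ∨ j + 2 ≤ p.1)) :
    Commute (sigma n j) (wordEval n w) := by
  unfold wordEval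
  refine Commute.list_prod_right _ _ ?_
  intro x hx
  simp only [List.mem_map] at hx
  obtain ⟨p, hp, rfl⟩ := hx
  obtain ⟨h1, h2, h3⟩ := hw p hp
  have hc : Commute (sigma n j) (sigma n p.1) :=
    commute_sigma_sigma hj h1 (by omega) hj' h2
  rcases p.2 with _ | _
  · simpa using hc.inv_right
  · simpa using hc

lemma Dd_sigma : ∀ k i : ℕ, 1 ≤ i → i + 1 ≤ k → k ≤ n-1 →
    wordEval n (Dw k) * sigma n i = sigma n (i+1) * wordEval n (Dw k)
  | 0, i, h1, h2, h3 => by omega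
  | k+1, i, h1, h2, h3 => by
      rcases Nat.lt_or_ge (i+1) (k+1) with hlt | hge
      · -- i + 1 ≤ k
        have hik : i + 1 ≤ k := by omega
        rw [wordEval_Dw_succ]
        have hc : Commute (sigma n (k+1)) (sigma n i) :=
          commute_sigma_sigma (by omega) h1 (by omega) h3 (by omega)
        rw [mul_assoc, hc.eq, ← mul_assoc, Dd_sigma k i h1 hik (by omega), mul_assoc]
      · -- i = k
        have hik : i = k := by omega
        subst hik
        have hi1 : i = (i-1) + 1 := by omega
        rw [wordEval_Dw_succ, hi1, wordEval_Dw_succ, ← hi1]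
        have hb : sigma n i * sigma n (i+1) * sigma n i
            = sigma n (i+1) * sigma n i * sigma n (i+1) := sigma_braid h1 h3
        have hc : Commute (sigma n (i+1)) (wordEval n (Dw (i-1))) := by
          refine commute_sigma_word (by omega) h3 ?_
          intro p hp
          have := mem_Dw hp
          exact ⟨this.1, by omega, by omega⟩
        calc wordEval n (Dw (i-1)) * sigma n i * sigma n (i+1) * sigma n i
            = wordEval n (Dw (i-1)) * (sigma n i * sigma n (i+1) * sigma n i) := by
              simp [mul_assoc]
          _ = wordEval n (Dw (i-1)) * (sigma n (i+1) * (sigma n i * sigma n (i+1))) := by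
              rw [hb]; simp [mul_assoc]
          _ = sigma n (i+1) * (wordEval n (Dw (i-1)) * sigma n i * sigma n (i+1)) := by
              rw [← mul_assoc, ← hc.eq]; simp [mul_assoc]

lemma Ee_sigma : ∀ k i : ℕ, 1 ≤ i → i + 1 ≤ k → k ≤ n-1 →
    sigma n i * wordEval n (Ew k) = wordEval n (Ew k) * sigma n (i+1)
  | 0, i, h1, h2, h3 => by omega
  | k+1, i, h1, h2, h3 => by
      show sigma n i * wordEval n ((k+1, true) :: Ew k) = _
      rw [wordEval_cons_true]
      rcases Nat.lt_or_ge (i+1) (k+1) with hlt | hge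
      · have hik : i + 1 ≤ k := by omega
        have hc : Commute (sigma n i) (sigma n (k+1)) :=
          commute_sigma_sigma h1 (by omega) (by omega) (by omega) h3
        rw [← mul_assoc, hc.eq, mul_assoc, Ee_sigma k i h1 hik (by omega)]
        show _ = wordEval n ((k+1, true) :: Ew k) * sigma n (i+1)
        rw [wordEval_cons_true]
        simp [mul_assoc]
      · have hik : i = k := by omega
        subst hik
        have hi1 : i = (i-1) + 1 := by omega
        have hEw : Ew i = (i, true) :: Ew (i-1) := by
          conv_lhs => rw [hi1]
          rw [show Ew (i-1+1) = ((i-1)+1, true) :: Ew (i-1) from rfl, ← hi1]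
        rw [hEw, wordEval_cons_true]
        have hb : sigma n i * sigma n (i+1) * sigma n i
            = sigma n (i+1) * sigma n i * sigma n (i+1) := sigma_braid h1 h3
        have hc : Commute (sigma n (i+1)) (wordEval n (Ew (i-1))) := by
          refine commute_sigma_word (by omega) h3 ?_
          intro p hp
          have := mem_Ew hp
          exact ⟨this.1, by omega, by omega⟩
        show sigma n i * (sigma n (i+1) * (sigma n i * wordEval n (Ew (i-1)))) = _
        calc sigma n i * (sigma n (i+1) * (sigma n i * wordEval n (Ew (i-1))))
            = sigma n i * sigma n (i+1) * sigma n i * wordEval n (Ew (i-1)) := by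
              simp [mul_assoc]
          _ = sigma n (i+1) * sigma n i * (sigma n (i+1) * wordEval n (Ew (i-1))) := by
              rw [hb]; simp [mul_assoc]
          _ = sigma n (i+1) * sigma n i * (wordEval n (Ew (i-1)) * sigma n (i+1)) := by
              rw [hc.eq]
          _ = wordEval n ((i+1, true) :: (i, true) :: Ew (i-1)) * sigma n (i+1) := by
              rw [wordEval_cons_true, wordEval_cons_true]; simp [mul_assoc]
          _ = wordEval n (Ew (i+1)) * sigma n (i+1) := by
              rw [show Ew (i+1) = (i+1, true) :: Ew i from rfl, hEw]

end BraidProof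
namespace BraidProof

lemma shift_word {k : ℕ} (hk : k ≤ n-1) :
    ∀ w : List (ℕ × Bool), (∀ p ∈ w, 1 ≤ p.1 ∧ p.1 + 1 ≤ k ∧ p.2 = true) →
      wordEval n w * wordEval n (Ew k) =
        wordEval n (Ew k) * wordEval n (w.map (fun p => (p.1 + 1, p.2)))
  | [], _ => by simp [wordEval_nil]
  | p :: t, hw => by
      obtain ⟨h1, h2, h3⟩ := hw p (List.mem_cons_self)
      have hp : p = (p.1, true) := by
        rcases p with ⟨a, b⟩; simp at h3; simp [h3]
      rw [hp, wordEval_cons_true, List.map_cons, mul_assoc,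
        shift_word hk t (fun q hq => hw q (List.mem_cons_of_mem _ hq)),
        ← mul_assoc, Ee_sigma k p.1 h1 h2 hk]
      simp [wordEval_cons_true, mul_assoc]

lemma DelE : ∀ k : ℕ, k ≤ n-1 →
    wordEval n (Delw (k+1)) = wordEval n (Delw k) * wordEval n (Ew k)
  | 0, _ => by simp [Delw, Dw, Ew, wordEval_nil]
  | k+1, hk => by
      have IH := DelE (n := n) k (by omega)
      have hc : Commute (sigma n (k+1)) (wordEval n (Delw k)) := by
        refine commute_sigma_word (by omega) hk ?_
        intro p hp
        have := mem_Delw hp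
        exact ⟨this.1, by omega, by omega⟩
      calc wordEval n (Delw (k+1+1))
          = wordEval n (Dw (k+1)) * wordEval n (Delw (k+1)) := wordEval_append _ _
        _ = (wordEval n (Dw k) * sigma n (k+1)) * (wordEval n (Delw k) * wordEval n (Ew k)) := by
            rw [wordEval_Dw_succ, IH]
        _ = wordEval n (Dw k) * ((sigma n (k+1) * wordEval n (Delw k)) * wordEval n (Ew k)) := by
            simp [mul_assoc]
        _ = wordEval n (Dw k) * ((wordEval n (Delw k) * sigma n (k+1)) * wordEval n (Ew k)) := by
            rw [hc.eq]
        _ = (wordEval n (Dw k) * wordEval n (Delw k)) * (sigma n (k+1) * wordEval n (Ew k)) := by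
            simp [mul_assoc]
        _ = wordEval n (Delw (k+1)) * wordEval n (Ew (k+1)) := by
            rw [← wordEval_append, show Ew (k+1) = (k+1, true) :: Ew k from rfl,
              wordEval_cons_true]
            rfl

lemma Del_conj : ∀ k : ℕ, k ≤ n → ∀ i : ℕ, 1 ≤ i → i + 1 ≤ k →
    wordEval n (Delw k) * sigma n i = sigma n (k - i) * wordEval n (Delw k)
  | 0, _, i, h1, h2 => by omega
  | k+1, hk, i, h1, h2 => by
      rcases Nat.lt_or_ge (i+1) (k+1) with hlt | hge
      · -- i + 1 ≤ k
        have hik : i + 1 ≤ k := by omega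
        show wordEval n (Dw k ++ Delw k) * sigma n i = _
        rw [wordEval_append, mul_assoc, Del_conj k (by omega) i h1 hik, ← mul_assoc,
          Dd_sigma k (k - i) (by omega) (by omega) (by omega)]
        rw [show k - i + 1 = k + 1 - i by omega]
        rw [show wordEval n (Delw (k+1)) = wordEval n (Dw k) * wordEval n (Delw k)
          from wordEval_append _ _, mul_assoc]
      · -- i = k
        have hik : i = k := by omega
        subst hik
        rw [show i + 1 - i = 1 by omega]
        rcases Nat.lt_or_ge i 2 with hi2 | hi2
        · -- i = 1 : Delw 2 = [(1,true)]
          have hone : i = 1 := by omega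
          subst hone
          have h2' : wordEval n (Delw (1+1)) = sigma n 1 := by
            simp [Delw, Dw, wordEval, List.range_succ]
          rw [h2']
        · -- i ≥ 2
          rw [DelE i (by omega)]
          have hIH : sigma n 1 * wordEval n (Delw i) = wordEval n (Delw i) * sigma n (i-1) := by
            have := Del_conj (n := n) i (by omega) (i-1) (by omega) (by omega)
            rw [show i - (i-1) = 1 by omega] at this
            exact this.symm
          have hE : sigma n (i-1) * wordEval n (Ew i) = wordEval n (Ew i) * sigma n ((i-1)+1) :=
            Ee_sigma i (i-1) (by omega) (by omega) (by omega)
          rw [show (i-1)+1 = i by omega] at hE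
          calc wordEval n (Delw i) * wordEval n (Ew i) * sigma n i
              = wordEval n (Delw i) * (sigma n (i-1) * wordEval n (Ew i)) := by
                rw [hE]; simp [mul_assoc]
            _ = (wordEval n (Delw i) * sigma n (i-1)) * wordEval n (Ew i) := by
                simp [mul_assoc]
            _ = sigma n 1 * (wordEval n (Delw i) * wordEval n (Ew i)) := by
                rw [← hIH]; simp [mul_assoc]

lemma head_lemma : ∀ k : ℕ, k ≤ n → ∀ j : ℕ, 1 ≤ j → j + 1 ≤ k →
    ∃ u : List (ℕ × Bool), (∀ p ∈ u, 1 ≤ p.1 ∧ p.1 + 1 ≤ k ∧ p.2 = true) ∧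
      sigma n j * wordEval n u = wordEval n (Delw k)
  | 0, _, j, h1, h2 => by omega
  | k+1, hk, j, h1, h2 => by
      rcases Nat.lt_or_ge (j+1) (k+1) with hlt | hge
      · -- j + 1 ≤ k
        obtain ⟨u, hu, he⟩ := head_lemma (n := n) k (by omega) j h1 (by omega)
        refine ⟨u ++ Ew k, ?_, ?_⟩
        · intro p hp
          rcases List.mem_append.1 hp with h | h
          · have := hu p h; exact ⟨this.1, by omega, this.2.2⟩
          · have := mem_Ew h; exact ⟨this.1, by omega, this.2.2⟩
        · rw [wordEval_append, ← mul_assoc, he, ← DelE k (by omega)]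
      · -- j = k
        have hjk : j = k := by omega
        subst hjk
        have hsh := shift_word (n := n) (k := j) (by omega) (Delw j)
          (fun p hp => mem_Delw hp)
        have hEwj : Ew j = (j, true) :: Ew (j-1) := by
          have hj1 : j = (j-1) + 1 := by omega
          conv_lhs => rw [hj1]
          rw [show Ew (j-1+1) = ((j-1)+1, true) :: Ew (j-1) from rfl, ← hj1]
        refine ⟨Ew (j-1) ++ (Delw j).map (fun p => (p.1 + 1, p.2)), ?_, ?_⟩
        · intro p hp
          rcases List.mem_append.1 hp with h | h
          · have := mem_Ew h; exact ⟨this.1, by omega, this.2.2⟩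
          · simp only [List.mem_map] at h
            obtain ⟨q, hq, rfl⟩ := h
            have := mem_Delw hq
            exact ⟨by omega, by simp; omega, by simp [this.2.2]⟩
        · rw [DelE j (by omega), hsh, hEwj, wordEval_cons_true, wordEval_append]
          simp [mul_assoc]

lemma delta_eq_aux : ∀ m : ℕ,
    ((List.range m).reverse.map
      (fun L => ((List.range (L + 1)).map (fun i => sigma n (i + 1))).prod)).prod =
      wordEval n (Delw (m+1))
  | 0 => by simp [Delw, Dw, wordEval_nil]
  | m+1 => by
      rw [List.range_succ, List.reverse_append, List.map_append, List.prod_append]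
      simp only [List.reverse_singleton, List.map_cons, List.map_nil, List.prod_cons,
        List.prod_nil, mul_one]
      rw [delta_eq_aux m]
      show _ = wordEval n (Dw (m+1) ++ Delw (m+1))
      rw [wordEval_append]
      congr 1
      simp only [wordEval, Dw, List.map_map, Function.comp_def]
      simp

lemma delta_eq (hn : 1 ≤ n) : delta n = wordEval n (Delw n) := by
  have := delta_eq_aux (n := n) (n-1)
  rw [show n - 1 + 1 = n by omega] at this
  exact this

lemma delta_conj {i : ℕ} (h1 : 1 ≤ i) (h2 : i ≤ n-1) :
    delta n * sigma n i = sigma n (n - i) * delta n := by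
  have hn : 2 ≤ n := by omega
  rw [delta_eq (by omega)]
  exact Del_conj n le_rfl i h1 (by omega)

lemma delta_sq_commute (g : BraidGroup n) : Commute (delta n ^ 2) g := by
  have key : ∀ x : Fin (n-1), delta n ^ 2 * PresentedGroup.of x = PresentedGroup.of x * delta n ^ 2 := by
    intro x
    have hx := x.2
    rw [of_eq_sigma]
    have h1 : 1 ≤ x.1 + 1 := by omega
    have h2 : x.1 + 1 ≤ n - 1 := by omega
    have h3 : 1 ≤ n - (x.1+1) := by omega
    have h4 : n - (x.1+1) ≤ n - 1 := by omega
    have e1 := delta_conj h1 h2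
    have e2 := delta_conj h3 h4
    rw [show n - (n - (x.1+1)) = x.1 + 1 by omega] at e2
    calc delta n ^ 2 * sigma n (x.1+1)
        = delta n * (delta n * sigma n (x.1+1)) := by rw [pow_two, mul_assoc]
      _ = delta n * sigma n (n - (x.1+1)) * delta n := by rw [e1, mul_assoc]
      _ = sigma n (x.1+1) * delta n * delta n := by rw [e2]
      _ = sigma n (x.1+1) * delta n ^ 2 := by rw [pow_two, mul_assoc]
  have hg : g ∈ Subgroup.centralizer {delta n ^ 2} := by
    refine PresentedGroup.generated_by _ _ (fun j => ?_) g
    exact Subgroup.mem_centralizer_iff.2 (fun h hh => by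
      rw [Set.mem_singleton_iff] at hh; subst hh; exact key j)
  have := Subgroup.mem_centralizer_iff.1 hg (delta n ^ 2) rfl
  exact this

lemma comm_pow (g : BraidGroup n) (m : ℕ) :
    delta n ^ (2*m+2) * g = g * delta n ^ (2*m+2) := by
  rw [show 2*m+2 = 2*(m+1) by omega, pow_mul]
  exact ((delta_sq_commute g).pow_left (m+1)).eq

end BraidProof
namespace BraidProof

lemma SP_posword {w : List (ℕ × Bool)}
    (hw : ∀ p ∈ w, 1 ≤ p.1 ∧ p.1 ≤ n-1 ∧ p.2 = true) (hne : w ≠ []) :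
    SigmaPositive n (wordEval n w) := by
  refine ⟨w, fun p hp => ⟨(hw p hp).1, (hw p hp).2.1⟩, rfl, ?_⟩
  have hSne : {j : ℕ | (j, true) ∈ w}.Nonempty := by
    rcases w with _ | ⟨p, t⟩
    · exact absurd rfl hne
    · refine ⟨p.1, ?_⟩
      have h3 := (hw p (List.mem_cons_self)).2.2
      have hpe : p = (p.1, true) := by rcases p with ⟨a, b⟩; simp at h3; simp [h3]
      show (p.1, true) ∈ p :: t
      rw [← hpe]
      exact List.mem_cons_self
  set i := sInf {j : ℕ | (j, true) ∈ w} with hi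
  have hiS : (i, true) ∈ w := Nat.sInf_mem hSne
  refine ⟨i, (hw _ hiS).1, (hw _ hiS).2.1, hiS, ?_, ?_⟩
  · intro p hp
    have h3 := (hw p hp).2.2
    have hpe : p = (p.1, true) := by rcases p with ⟨a, b⟩; simp at h3; simp [h3]
    exact Nat.sInf_le (by rw [hpe] at hp; exact hp)
  · intro hmem
    have := (hw _ hmem).2.2
    simp at this

lemma SP_mul {x y : BraidGroup n} (hx : SigmaPositive n x) (hy : SigmaPositive n y) :
    SigmaPositive n (x * y) := by
  obtain ⟨w1, v1, e1, i1, hi11, hi12, hm1, hlb1, hnf1⟩ := hx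
  obtain ⟨w2, v2, e2, i2, hi21, hi22, hm2, hlb2, hnf2⟩ := hy
  refine ⟨w1 ++ w2, ?_, by rw [wordEval_append, e1, e2], ?_⟩
  · intro p hp
    rcases List.mem_append.1 hp with h | h
    · exact v1 p h
    · exact v2 p h
  rcases le_total i1 i2 with h | h
  · refine ⟨i1, hi11, hi12, List.mem_append.2 (Or.inl hm1), ?_, ?_⟩
    · intro p hp
      rcases List.mem_append.1 hp with hh | hh
      · exact hlb1 p hh
      · exact le_trans h (hlb2 p hh)
    · intro hmem
      rcases List.mem_append.1 hmem with hh | hh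
      · exact hnf1 hh
      · have := hlb2 _ hh
        have hieq : i1 = i2 := by omega
        exact hnf2 (hieq ▸ hh)
  · refine ⟨i2, hi21, hi22, List.mem_append.2 (Or.inr hm2), ?_, ?_⟩
    · intro p hp
      rcases List.mem_append.1 hp with hh | hh
      · exact le_trans h (hlb1 p hh)
      · exact hlb2 p hh
    · intro hmem
      rcases List.mem_append.1 hmem with hh | hh
      · have := hlb1 _ hh
        have hieq : i2 = i1 := by omega
        exact hnf1 (hieq ▸ hh)
      · exact hnf2 hh

lemma wordEval_inv : ∀ w : List (ℕ × Bool),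
    wordEval n (w.reverse.map (fun p => (p.1, !p.2))) = (wordEval n w)⁻¹
  | [] => by simp [wordEval_nil]
  | p :: t => by
      rw [List.reverse_cons, List.map_append, wordEval_append, wordEval_inv t,
        wordEval_cons]
      rcases p with ⟨a, b⟩
      rcases b with _ | _ <;> simp [wordEval]

lemma exists_word (γ : BraidGroup n) : ∃ w, ValidWord n w ∧ wordEval n w = γ := by
  induction γ using PresentedGroup.induction_on with
  | _ z =>
    induction z using FreeGroup.induction_on with
    | C1 => exact ⟨[], fun p hp => by simp at hp, by rw [map_one]; rfl⟩
    | of x =>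
        refine ⟨[(x.1+1, true)], ?_, ?_⟩
        · intro p hp
          have hx := x.2
          simp at hp
          subst hp
          constructor <;> omega
        · rw [wordEval_cons_true, wordEval_nil, mul_one, ← of_eq_sigma]
          rfl
    | inv_of x _ =>
        refine ⟨[(x.1+1, false)], ?_, ?_⟩
        · intro p hp
          have hx := x.2
          simp at hp
          subst hp
          constructor <;> omega
        · rw [wordEval_cons, wordEval_nil, mul_one]
          simp only [Bool.false_eq_true, if_false]
          rw [← of_eq_sigma]
          rw [map_inv]
          rfl
    | mul x y hx hy =>
        obtain ⟨w1, v1, e1⟩ := hx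
        obtain ⟨w2, v2, e2⟩ := hy
        refine ⟨w1 ++ w2, ?_, ?_⟩
        · intro p hp
          rcases List.mem_append.1 hp with h | h
          · exact v1 p h
          · exact v2 p h
        · rw [wordEval_append, e1, e2, map_mul]

lemma Delw_ne_nil (hn : 2 ≤ n) : Delw n ≠ [] := by
  obtain ⟨m, hm⟩ : ∃ m, n = m + 1 := ⟨n-1, by omega⟩
  have hm1 : 1 ≤ m := by omega
  subst hm
  show Dw m ++ Delw m ≠ []
  intro hcon
  have h1 := List.append_eq_nil_iff.1 hcon
  have h2 : (Dw m).length = m := by simp [Dw]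
  rw [h1.1] at h2
  simp at h2
  omega

lemma Delw_bounds {p : ℕ × Bool} (hp : p ∈ Delw n) : 1 ≤ p.1 ∧ p.1 ≤ n-1 ∧ p.2 = true := by
  have := mem_Delw hp
  exact ⟨this.1, by omega, this.2.2⟩

lemma SP_delta_sq (hn : 2 ≤ n) : SigmaPositive n (delta n ^ 2) := by
  have h : delta n ^ 2 = wordEval n (Delw n ++ Delw n) := by
    rw [wordEval_append, ← delta_eq (by omega), pow_two]
  rw [h]
  refine SP_posword ?_ ?_
  · intro p hp
    rcases List.mem_append.1 hp with hh | hh <;> exact Delw_bounds hh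
  · intro hcon
    exact Delw_ne_nil hn (List.append_eq_nil_iff.1 hcon).1

lemma SP_letter (hn : 2 ≤ n) (p : ℕ × Bool) (h1 : 1 ≤ p.1) (h2 : p.1 ≤ n-1) :
    SigmaPositive n ((if p.2 then sigma n p.1 else (sigma n p.1)⁻¹) * delta n ^ 2) := by
  rcases p with ⟨j, b⟩
  rcases b with _ | _
  · -- σ_j⁻¹ Δ²
    simp only [Bool.false_eq_true, if_false]
    obtain ⟨u, hu, he⟩ := head_lemma (n := n) n le_rfl j h1 (by omega)
    have hD : delta n = sigma n j * wordEval n u := by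
      rw [delta_eq (n := n) (by omega), ← he]
    have hkey : (sigma n j)⁻¹ * delta n ^ 2 = wordEval n (u ++ Delw n) := by
      rw [pow_two, wordEval_append, ← delta_eq (n := n) (by omega)]
      nth_rewrite 1 [hD]
      group
    rw [hkey]
    refine SP_posword ?_ ?_
    · intro q hq
      rcases List.mem_append.1 hq with hh | hh
      · have := hu q hh; exact ⟨this.1, by omega, this.2.2⟩
      · exact Delw_bounds hh
    · intro hcon
      exact Delw_ne_nil hn (List.append_eq_nil_iff.1 hcon).2
  · -- σ_j Δ²
    simp only [if_true]
    have hkey : sigma n j * delta n ^ 2 = wordEval n ((j, true) :: (Delw n ++ Delw n)) := by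
      rw [wordEval_cons_true, wordEval_append, ← delta_eq (by omega), pow_two]
    rw [hkey]
    refine SP_posword ?_ (by simp)
    intro q hq
    rcases List.mem_cons.1 hq with hh | hh
    · subst hh; exact ⟨h1, h2, rfl⟩
    · rcases List.mem_append.1 hh with h3 | h3 <;> exact Delw_bounds h3

lemma key_lemma (hn : 2 ≤ n) : ∀ w : List (ℕ × Bool), ValidWord n w →
    SigmaPositive n (wordEval n w * delta n ^ (2 * w.length + 2))
  | [], _ => by
      simpa [wordEval_nil] using SP_delta_sq hn
  | p :: t, hv => by
      have hp := hv p (List.mem_cons_self)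
      have hv' : ValidWord n t := fun q hq => hv q (List.mem_cons_of_mem _ hq)
      have IH := key_lemma hn t hv'
      have hlen : 2 * (p :: t).length + 2 = (2 * t.length + 2) + 2 := by
        simp [List.length_cons]; omega
      have heq : wordEval n (p :: t) * delta n ^ (2 * (p :: t).length + 2)
          = ((if p.2 then sigma n p.1 else (sigma n p.1)⁻¹) * delta n ^ 2)
            * (wordEval n t * delta n ^ (2 * t.length + 2)) := by
        rw [hlen, pow_add, wordEval_cons]
        have hc := (delta_sq_commute (wordEval n t * delta n ^ (2 * t.length + 2))).eq
        calc (if p.2 = true then sigma n p.1 else (sigma n p.1)⁻¹) * wordEval n t *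
              (delta n ^ (2 * t.length + 2) * delta n ^ 2)
            = (if p.2 = true then sigma n p.1 else (sigma n p.1)⁻¹) *
              ((wordEval n t * delta n ^ (2 * t.length + 2)) * delta n ^ 2) := by
              simp [mul_assoc]
          _ = (if p.2 = true then sigma n p.1 else (sigma n p.1)⁻¹) *
              (delta n ^ 2 * (wordEval n t * delta n ^ (2 * t.length + 2))) := by
              rw [← hc]
          _ = _ := by simp [mul_assoc]
      rw [heq]
      exact SP_mul (SP_letter hn p hp.1 hp.2) IH

end BraidProof
/-- for all `α, β ∈ B_n`, `[αβ]_D ≤ 1 + [α]_D + [β]_D`. -/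
theorem dFloor_mul_le (n : ℕ) (α β : BraidGroup n) :
    dFloor n (α * β) ≤ 1 + dFloor n α + dFloor n β := by
  by_cases hn : 2 ≤ n
  · have hzpow1 : ∀ m : ℕ, (delta n ^ (-(2 * (m:ℤ)) - 2))⁻¹ = delta n ^ (2*m+2) := by
      intro m
      rw [← zpow_neg, show -(-(2 * (m:ℤ)) - 2) = ((2*m+2 : ℕ) : ℤ) by push_cast; ring,
        zpow_natCast]
    have hzpow2 : ∀ m : ℕ, delta n ^ (2 * (m:ℤ) + 2) = delta n ^ (2*m+2) := by
      intro m
      rw [show (2 * (m:ℤ) + 2) = ((2*m+2 : ℕ) : ℤ) by push_cast; ring, zpow_natCast]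
    have hmem : ∀ (γ : BraidGroup n) (m : ℕ),
        (dlt n (delta n ^ (-(2 * (m:ℤ)) - 2)) γ ∧ dlt n γ (delta n ^ (2 * (m:ℤ) + 2))) ↔
        (SigmaPositive n (delta n ^ (2*m+2) * γ) ∧
          SigmaPositive n (γ⁻¹ * delta n ^ (2*m+2))) := by
      intro γ m
      unfold dlt
      rw [hzpow1, hzpow2]
    have hSne : ∀ γ : BraidGroup n, {m : ℕ |
        dlt n (delta n ^ (-(2 * (m : ℤ)) - 2)) γ ∧
          dlt n γ (delta n ^ (2 * (m : ℤ) + 2))}.Nonempty := by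
      intro γ
      obtain ⟨w, hv, he⟩ := BraidProof.exists_word γ
      refine ⟨w.length, (hmem γ w.length).2 ⟨?_, ?_⟩⟩
      · rw [BraidProof.comm_pow γ w.length, ← he]
        exact BraidProof.key_lemma hn w hv
      · set w' := w.reverse.map (fun p => (p.1, !p.2)) with hw'
        have hv' : ValidWord n w' := by
          intro p hp
          rw [hw'] at hp
          simp only [List.mem_map, List.mem_reverse] at hp
          obtain ⟨q, hq, rfl⟩ := hp
          exact hv q hq
        have he' : wordEval n w' = γ⁻¹ := by rw [hw', BraidProof.wordEval_inv, he]
        have hl : w'.length = w.length := by rw [hw']; simp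
        rw [← he', ← hl]
        exact BraidProof.key_lemma hn w' hv'
    have hfloor : ∀ γ : BraidGroup n, dFloor n γ ∈ {m : ℕ |
        dlt n (delta n ^ (-(2 * (m : ℤ)) - 2)) γ ∧
          dlt n γ (delta n ^ (2 * (m : ℤ) + 2))} := fun γ => Nat.sInf_mem (hSne γ)
    set a := dFloor n α with ha
    set b := dFloor n β with hb
    obtain ⟨hα1, hα2⟩ := (hmem α a).1 (hfloor α)
    obtain ⟨hβ1, hβ2⟩ := (hmem β b).1 (hfloor β)
    apply Nat.sInf_le
    refine (hmem (α*β) (1+a+b)).2 ⟨?_, ?_⟩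
    · have hsplit : delta n ^ (2*(1+a+b)+2) = delta n ^ (2*a+2) * delta n ^ (2*b+2) := by
        rw [show 2*(1+a+b)+2 = (2*a+2)+(2*b+2) by omega, pow_add]
      have e1 : delta n ^ (2*a+2) * delta n ^ (2*b+2) * (α * β)
          = (delta n ^ (2*a+2) * α) * (delta n ^ (2*b+2) * β) := by
        calc delta n ^ (2*a+2) * delta n ^ (2*b+2) * (α * β)
            = delta n ^ (2*a+2) * ((delta n ^ (2*b+2) * α) * β) := by simp [mul_assoc]
          _ = delta n ^ (2*a+2) * ((α * delta n ^ (2*b+2)) * β) := by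
              rw [BraidProof.comm_pow α b]
          _ = _ := by simp [mul_assoc]
      rw [hsplit, e1]
      exact BraidProof.SP_mul hα1 hβ1
    · have hsplit : delta n ^ (2*(1+a+b)+2) = delta n ^ (2*a+2) * delta n ^ (2*b+2) := by
        rw [show 2*(1+a+b)+2 = (2*a+2)+(2*b+2) by omega, pow_add]
      have e2 : (β⁻¹ * delta n ^ (2*b+2)) * (α⁻¹ * delta n ^ (2*a+2))
          = (α * β)⁻¹ * (delta n ^ (2*a+2) * delta n ^ (2*b+2)) := by
        calc (β⁻¹ * delta n ^ (2*b+2)) * (α⁻¹ * delta n ^ (2*a+2))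
            = β⁻¹ * ((delta n ^ (2*b+2) * α⁻¹) * delta n ^ (2*a+2)) := by simp [mul_assoc]
          _ = β⁻¹ * ((α⁻¹ * delta n ^ (2*b+2)) * delta n ^ (2*a+2)) := by
              rw [BraidProof.comm_pow α⁻¹ b]
          _ = (β⁻¹ * α⁻¹) * (delta n ^ (2*b+2) * delta n ^ (2*a+2)) := by simp [mul_assoc]
          _ = (α * β)⁻¹ * (delta n ^ (2*a+2) * delta n ^ (2*b+2)) := by
              rw [mul_inv_rev, ← pow_add, ← pow_add,
                show (2*b+2)+(2*a+2) = (2*a+2)+(2*b+2) by omega]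
      rw [hsplit, ← e2]
      exact BraidProof.SP_mul hβ2 hα2
  · have hempty : {m : ℕ | dlt n (delta n ^ (-(2 * (m : ℤ)) - 2)) (α*β) ∧
        dlt n (α*β) (delta n ^ (2 * (m : ℤ) + 2))} = ∅ := by
      ext m
      simp only [Set.mem_setOf_eq, Set.mem_empty_iff_false, iff_false]
      rintro ⟨⟨w, hvw, hew, i, hi1, hi2, -⟩, -⟩
      omega
    unfold dFloor
    rw [hempty, Nat.sInf_empty]
    omega
end
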